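/- arXiv:2301.08969 — 5 statements merged into one kernel-verified Lean document; each statement's English description precedes it below -/
import Mathlib

section
/- For every Parikh-recognizable language L ⊆ Σ*, the ω-power L^ω = {w₁w₂w₃... | w_i ∈ L \ {ε}} is SPBA-recognizable. -/
/-- A linear subset of `ℕ^d`: all vectors `b₀ + z₁•b₁ + ... + z_ℓ•b_ℓ`. -/
def IsLinear {d : ℕ} (S : Set (Fin d → ℕ)) : Prop :=
  ∃ (b₀ : Fin d → ℕ) (ℓ : ℕ) (b : Fin ℓ → Fin d → ℕ),
    S = {v | ∃ z : Fin ℓ → ℕ, v = b₀ + ∑ i, z i • b i}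

/-- A semi-linear subset of `ℕ^d`: a finite union of linear sets. -/
def IsSemilinear {d : ℕ} (S : Set (Fin d → ℕ)) : Prop :=
  ∃ (n : ℕ) (T : Fin n → Set (Fin d → ℕ)), (∀ i, IsLinear (T i)) ∧ S = ⋃ i, T i

/-- The number of input-consuming steps among the first `i` steps. -/
def readCount (reads : ℕ → Bool) (i : ℕ) : ℕ :=
  ((Finset.range i).filter (fun j => reads j = true)).card

/-- A run of an ε-free vector-labeled automaton on the infinite word `α`:
`p` is the state sequence, `v i` the vector of the `i`-th transition. -/
def IsRun {Q Sig : Type} {d : ℕ} (q0 : Q) (Δ : Set (Q × Sig × (Fin d → ℕ) × Q))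
    (α : ℕ → Sig) (p : ℕ → Q) (v : ℕ → Fin d → ℕ) : Prop :=
  p 0 = q0 ∧ ∀ i, (p i, α i, v i, p (i + 1)) ∈ Δ

/-- A run of an automaton with ε-transitions `E` on the infinite word `α`;
`reads i = true` iff the `i`-th transition consumes an input symbol, and
infinitely many transitions must consume a symbol. -/
def IsEpsRun {Q Sig : Type} {d : ℕ} (q0 : Q) (Δ : Set (Q × Sig × (Fin d → ℕ) × Q))
    (E : Set (Q × (Fin d → ℕ) × Q)) (α : ℕ → Sig) (p : ℕ → Q) (v : ℕ → Fin d → ℕ)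
    (reads : ℕ → Bool) : Prop :=
  p 0 = q0 ∧ (∀ N, ∃ i, N ≤ i ∧ reads i = true) ∧
    ∀ i, if reads i then (p i, α (readCount reads i), v i, p (i + 1)) ∈ Δ
      else (p i, v i, p (i + 1)) ∈ E

/-- Prefix-acceptance: infinitely many positions `n ≥ 1` where the current state is
accepting and the accumulated vector sum lies in the (state-dependent) semi-linear set. -/
def PrefixCond {Q : Type} {d : ℕ} (F : Set Q) (C : Q → Set (Fin d → ℕ))
    (p : ℕ → Q) (v : ℕ → Fin d → ℕ) : Prop :=
  ∀ N, ∃ n, N ≤ n ∧ 1 ≤ n ∧ p n ∈ F ∧ (∑ j ∈ Finset.range n, v j) ∈ C (p n)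

/-- Weak reset-acceptance: there are infinitely many reset positions `0 = k 0 < k 1 < ...`
such that each `p (k (i+1))` is accepting and the vector sum between consecutive
reset positions lies in the corresponding semi-linear set. -/
def WeakCond {Q : Type} {d : ℕ} (F : Set Q) (C : Q → Set (Fin d → ℕ))
    (p : ℕ → Q) (v : ℕ → Fin d → ℕ) : Prop :=
  ∃ k : ℕ → ℕ, k 0 = 0 ∧ StrictMono k ∧
    ∀ i, p (k (i + 1)) ∈ F ∧
      (∑ j ∈ Finset.Ico (k i) (k (i + 1)), v j) ∈ C (p (k (i + 1)))

/-- Strong reset-acceptance: `k 1 < k 2 < ...` enumerates *all* positions `n ≥ 1` of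
accepting states (so there are infinitely many), and the vector sum between any two
consecutive such positions (with `k 0 = 0`) lies in the corresponding semi-linear set. -/
def StrongCond {Q : Type} {d : ℕ} (F : Set Q) (C : Q → Set (Fin d → ℕ))
    (p : ℕ → Q) (v : ℕ → Fin d → ℕ) : Prop :=
  ∃ k : ℕ → ℕ, k 0 = 0 ∧ StrictMono k ∧
    (∀ n, 1 ≤ n → (p n ∈ F ↔ ∃ i, 1 ≤ i ∧ k i = n)) ∧
    ∀ i, (∑ j ∈ Finset.Ico (k i) (k (i + 1)), v j) ∈ C (p (k (i + 1)))

/-- A Parikh(-Büchi) automaton of dimension `d` (also used as a Parikh automaton on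
finite words): finitely many states, vector-labeled transitions, a semi-linear set `C`. -/
structure PBA (Sig : Type) (d : ℕ) where
  Q : Type
  fin : Fintype Q
  q0 : Q
  Δ : Set (Q × Sig × (Fin d → ℕ) × Q)
  F : Set Q
  C : Set (Fin d → ℕ)

attribute [instance] PBA.fin

/-- `P_ω(A)`: the ω-language recognized under prefix-acceptance (PPBA). -/
def PBA.PrefixLang {Sig d} (A : PBA Sig d) : Set (ℕ → Sig) :=
  {α | ∃ p v, IsRun A.q0 A.Δ α p v ∧ PrefixCond A.F (fun _ => A.C) p v}

/-- `W_ω(A)`: the ω-language recognized under weak reset-acceptance (WPBA). -/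
def PBA.WeakLang {Sig d} (A : PBA Sig d) : Set (ℕ → Sig) :=
  {α | ∃ p v, IsRun A.q0 A.Δ α p v ∧ WeakCond A.F (fun _ => A.C) p v}

/-- `S_ω(A)`: the ω-language recognized under strong reset-acceptance (SPBA). -/
def PBA.StrongLang {Sig d} (A : PBA Sig d) : Set (ℕ → Sig) :=
  {α | ∃ p v, IsRun A.q0 A.Δ α p v ∧ StrongCond A.F (fun _ => A.C) p v}

/-- Acceptance of a finite word by a Parikh automaton. -/
def PBA.FinAccepts {Sig d} (A : PBA Sig d) (w : List Sig) : Prop :=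
  ∃ (p : ℕ → A.Q) (v : ℕ → Fin d → ℕ),
    p 0 = A.q0 ∧ (∀ i : Fin w.length, (p i, w.get i, v i, p (i + 1)) ∈ A.Δ) ∧
    p w.length ∈ A.F ∧ (∑ j ∈ Finset.range w.length, v j) ∈ A.C

/-- `L(A)`: the language of finite words recognized by a Parikh automaton. -/
def PBA.FinLang {Sig d} (A : PBA Sig d) : Set (List Sig) := {w | A.FinAccepts w}

/-- A Parikh-Büchi automaton with ε-transitions. -/
structure EpsPBA (Sig : Type) (d : ℕ) where
  Q : Type
  fin : Fintype Q
  q0 : Q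
  Δ : Set (Q × Sig × (Fin d → ℕ) × Q)
  E : Set (Q × (Fin d → ℕ) × Q)
  F : Set Q
  C : Set (Fin d → ℕ)

attribute [instance] EpsPBA.fin

def EpsPBA.PrefixLang {Sig d} (A : EpsPBA Sig d) : Set (ℕ → Sig) :=
  {α | ∃ p v reads, IsEpsRun A.q0 A.Δ A.E α p v reads ∧ PrefixCond A.F (fun _ => A.C) p v}

def EpsPBA.WeakLang {Sig d} (A : EpsPBA Sig d) : Set (ℕ → Sig) :=
  {α | ∃ p v reads, IsEpsRun A.q0 A.Δ A.E α p v reads ∧ WeakCond A.F (fun _ => A.C) p v}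

def EpsPBA.StrongLang {Sig d} (A : EpsPBA Sig d) : Set (ℕ → Sig) :=
  {α | ∃ p v reads, IsEpsRun A.q0 A.Δ A.E α p v reads ∧ StrongCond A.F (fun _ => A.C) p v}

/-- A Multi-PBA: every (accepting) state carries its own semi-linear set. -/
structure MPBA (Sig : Type) (d : ℕ) where
  Q : Type
  fin : Fintype Q
  q0 : Q
  Δ : Set (Q × Sig × (Fin d → ℕ) × Q)
  F : Set Q
  C : Q → Set (Fin d → ℕ)

attribute [instance] MPBA.fin

def MPBA.PrefixLang {Sig d} (A : MPBA Sig d) : Set (ℕ → Sig) :=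
  {α | ∃ p v, IsRun A.q0 A.Δ α p v ∧ PrefixCond A.F A.C p v}

/-- A Multi-PBA with ε-transitions. -/
structure EpsMPBA (Sig : Type) (d : ℕ) where
  Q : Type
  fin : Fintype Q
  q0 : Q
  Δ : Set (Q × Sig × (Fin d → ℕ) × Q)
  E : Set (Q × (Fin d → ℕ) × Q)
  F : Set Q
  C : Q → Set (Fin d → ℕ)

attribute [instance] EpsMPBA.fin

def EpsMPBA.StrongLang {Sig d} (A : EpsMPBA Sig d) : Set (ℕ → Sig) :=
  {α | ∃ p v reads, IsEpsRun A.q0 A.Δ A.E α p v reads ∧ StrongCond A.F A.C p v}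

/-- A language of finite words is Parikh-recognizable. -/
def ParikhRec {Sig : Type} (L : Set (List Sig)) : Prop :=
  ∃ d, ∃ A : PBA Sig d, IsSemilinear A.C ∧ A.FinLang = L

/-- An ω-language is PPBA-recognizable. -/
def PPBARec {Sig : Type} (L : Set (ℕ → Sig)) : Prop :=
  ∃ d, ∃ A : PBA Sig d, IsSemilinear A.C ∧ A.PrefixLang = L

/-- An ω-language is SPBA-recognizable. -/
def SPBARec {Sig : Type} (L : Set (ℕ → Sig)) : Prop :=
  ∃ d, ∃ A : PBA Sig d, IsSemilinear A.C ∧ A.StrongLang = L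

/-- Concatenation of a language of finite words with an ω-language. -/
def CatLang {Sig : Type} (L₁ : Set (List Sig)) (L₂ : Set (ℕ → Sig)) : Set (ℕ → Sig) :=
  {α | ∃ u ∈ L₁, ∃ β ∈ L₂,
    (∀ i : Fin u.length, α i = u.get i) ∧ ∀ n, β n = α (u.length + n)}

/-- `α` is the concatenation `w 0 ++ w 1 ++ w 2 ++ ⋯` of the finite words `w i`. -/
def IsOmegaConcat {Sig : Type} (w : ℕ → List Sig) (α : ℕ → Sig) : Prop :=
  ∀ n : ℕ, ∀ i : Fin (((List.range n).map w).flatten.length),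
    ((List.range n).map w).flatten.get i = α i

/-- The ω-power `L^ω = {w₁w₂w₃⋯ ∣ w_i ∈ L ∖ {ε}}`. -/
def OmegaPower {Sig : Type} (L : Set (List Sig)) : Set (ℕ → Sig) :=
  {α | ∃ w : ℕ → List Sig, (∀ i, w i ∈ L) ∧ (∀ i, w i ≠ []) ∧ IsOmegaConcat w α}

/-- Kleene star of a set of finite words. -/
def ListStar {Sig : Type} (L : Set (List Sig)) : Set (List Sig) :=
  {w | ∃ ws : List (List Sig), (∀ u ∈ ws, u ∈ L) ∧ w = ws.flatten}

/-- A (nondeterministic) Büchi automaton. -/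
structure BuchiNFA (Sig : Type) where
  Q : Type
  fin : Fintype Q
  q0 : Q
  Δ : Set (Q × Sig × Q)
  F : Set Q

attribute [instance] BuchiNFA.fin

def BuchiNFA.Lang {Sig} (B : BuchiNFA Sig) : Set (ℕ → Sig) :=
  {α | ∃ p : ℕ → B.Q, p 0 = B.q0 ∧ (∀ i, (p i, α i, p (i + 1)) ∈ B.Δ) ∧
    ∀ N, ∃ n, N ≤ n ∧ p n ∈ B.F}

/-- An ω-language is ω-regular if it is recognized by a Büchi automaton. -/
def OmegaRegular {Sig : Type} (R : Set (ℕ → Sig)) : Prop := ∃ B : BuchiNFA Sig, B.Lang = R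

/-- A blind `k`-counter machine: transitions are labeled by a letter or ε (`Option Sig`)
and an integer vector. -/
structure CM (Sig : Type) (k : ℕ) where
  Q : Type
  fin : Fintype Q
  q0 : Q
  Δ : Set (Q × Option Sig × (Fin k → ℤ) × Q)
  F : Set Q

attribute [instance] CM.fin

/-- The ω-language of a blind counter machine: some run reads every symbol of `α`
and is infinitely often in an accepting state with all counters equal to `0`. -/
def CM.Lang {Sig k} (M : CM Sig k) : Set (ℕ → Sig) :=
  {α | ∃ (p : ℕ → M.Q) (v : ℕ → Fin k → ℤ) (reads : ℕ → Bool),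
    p 0 = M.q0 ∧ (∀ N, ∃ i, N ≤ i ∧ reads i = true) ∧
    (∀ i, if reads i then (p i, some (α (readCount reads i)), v i, p (i + 1)) ∈ M.Δ
      else (p i, (none : Option Sig), v i, p (i + 1)) ∈ M.Δ) ∧
    ∀ N, ∃ n, N ≤ n ∧ p n ∈ M.F ∧ (∑ j ∈ Finset.range n, v j) = 0}

section OmegaPowerAux

variable {Sig : Type} {d : ℕ}

/-- Cumulative lengths of a sequence of words. -/
def cumLen (w : ℕ → List Sig) : ℕ → ℕ
  | 0 => 0
  | n + 1 => cumLen w n + (w n).length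

lemma flatten_len (w : ℕ → List Sig) (n : ℕ) :
    ((List.range n).map w).flatten.length = cumLen w n := by
  induction n with
  | zero => simp [cumLen]
  | succ n ih => rw [List.range_succ]; simp [cumLen, ih]

lemma flatten_get_aux (w : ℕ → List Sig) (i j : ℕ) (hj : j < (w i).length) :
    ((List.range (i+1)).map w).flatten[cumLen w i + j]'
      (by rw [flatten_len]; show _ < cumLen w i + (w i).length; omega) = (w i)[j] := by
  have heq : ((List.range (i+1)).map w).flatten = ((List.range i).map w).flatten ++ (w i) := by
    rw [List.range_succ]; simp
  rw [List.getElem_of_eq heq, List.getElem_append_right (by rw [flatten_len]; omega)]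
  simp only [flatten_len, Nat.add_sub_cancel_left]

lemma concat_get (w : ℕ → List Sig) (α : ℕ → Sig) (h : IsOmegaConcat w α)
    (i j : ℕ) (hj : j < (w i).length) :
    α (cumLen w i + j) = (w i)[j] := by
  have hlt : cumLen w i + j < ((List.range (i+1)).map w).flatten.length := by
    rw [flatten_len]; show _ < cumLen w i + (w i).length; omega
  have := h (i+1) ⟨cumLen w i + j, hlt⟩
  simp only [List.get_eq_getElem] at this
  rw [← this, flatten_get_aux w i j hj]

lemma flatten_eq_range_map (α : ℕ → Sig) (k : ℕ → ℕ) (hk0 : k 0 = 0)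
    (hmono : ∀ i, k i ≤ k (i+1)) (n : ℕ) :
    ((List.range n).map (fun i => (List.range (k (i+1) - k i)).map (fun j => α (k i + j)))).flatten
      = (List.range (k n)).map α := by
  induction n with
  | zero => simp [hk0]
  | succ n ih =>
    rw [List.range_succ, List.map_append, List.flatten_append, ih]
    have h1 : k (n+1) = k n + (k (n+1) - k n) := by have := hmono n; omega
    rw [h1, List.range_add, List.map_append]
    simp [List.map_map, Function.comp]

/-- Transition relation of the ω-power automaton: simulate `A`, where the fresh
state `none` behaves like `A.q0` as a source, and a transition may jump to `none`
whenever it could reach an accepting state of `A`. -/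
def PowDelta (A : PBA Sig d) : Set (Option A.Q × Sig × (Fin d → ℕ) × Option A.Q) :=
  {t | ∃ q', (t.1.getD A.q0, t.2.1, t.2.2.1, q') ∈ A.Δ ∧
      (t.2.2.2 = some q' ∨ (t.2.2.2 = none ∧ q' ∈ A.F))}

/-- The ω-power automaton. -/
def PowPBA (A : PBA Sig d) : PBA Sig d :=
  ⟨Option A.Q, inferInstance, none, PowDelta A, {none}, A.C⟩

lemma pow_forward (A : PBA Sig d) : OmegaPower A.FinLang ⊆ (PowPBA A).StrongLang := by
  intro α hα
  obtain ⟨w, hwL, hwne, hcat⟩ := hα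
  choose P V hrun using hwL
  have hP0 : ∀ i, P i 0 = A.q0 := fun i => (hrun i).1
  have hPΔ : ∀ i, ∀ j : Fin (w i).length,
      (P i j, (w i).get j, V i j, P i (j + 1)) ∈ A.Δ := fun i => (hrun i).2.1
  have hPF : ∀ i, P i (w i).length ∈ A.F := fun i => (hrun i).2.2.1
  have hPC : ∀ i, (∑ j ∈ Finset.range (w i).length, V i j) ∈ A.C := fun i => (hrun i).2.2.2
  set c := cumLen w with hc
  have hlenpos : ∀ i, 0 < (w i).length := fun i => List.length_pos_iff.2 (hwne i)
  have hcsucc : ∀ i, c (i+1) = c i + (w i).length := fun i => rfl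
  have hcs : ∀ i, c i < c (i+1) := fun i => by have := hlenpos i; rw [hcsucc]; omega
  have hcmono : StrictMono c := strictMono_nat_of_lt_succ hcs
  have hcge : ∀ i, i ≤ c i := fun i => by
    induction i with
    | zero => omega
    | succ i ih => have := hcs i; omega
  set idx : ℕ → ℕ := fun n => Nat.findGreatest (fun i => c i ≤ n) (n+1) with hidxdef
  have hc0 : c 0 = 0 := rfl
  have hidx_le : ∀ n, c (idx n) ≤ n := fun n =>
    Nat.findGreatest_spec (P := fun i => c i ≤ n) (m := 0) (by omega) (by show c 0 ≤ n; rw [hc0]; omega)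
  have hidx_lt : ∀ n, n < c (idx n + 1) := fun n => by
    by_contra hcon
    push_neg at hcon
    have h2 : idx n + 1 ≤ n + 1 := by have := hcge (idx n + 1); omega
    exact Nat.findGreatest_is_greatest (Nat.lt_succ_self _) h2 hcon
  have hidx_eq : ∀ i n, c i ≤ n → n < c (i+1) → idx n = i := by
    intro i n h1 h2
    have a := hidx_le n
    have b := hidx_lt n
    by_contra hne
    rcases Nat.lt_or_ge (idx n) i with hlt | hge
    · have h3 : c (idx n + 1) ≤ c i := hcmono.monotone (Nat.succ_le_of_lt hlt)
      omega
    · have hgt : i < idx n := lt_of_le_of_ne hge (Ne.symm hne)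
      have h3 : c (i + 1) ≤ c (idx n) := hcmono.monotone (Nat.succ_le_of_lt hgt)
      omega
  have hc_idx : ∀ i, idx (c i) = i := fun i => hidx_eq i (c i) le_rfl (hcs i)
  set p : ℕ → Option A.Q := fun n =>
    if n = c (idx n) then none else some (P (idx n) (n - c (idx n))) with hpdef
  set v : ℕ → Fin d → ℕ := fun n => V (idx n) (n - c (idx n)) with hvdef
  have hidx0 : idx 0 = 0 := hidx_eq 0 0 le_rfl (by have := hcs 0; omega)
  have hp0 : p 0 = none := by rw [hpdef]; simp [hidx0, hc0]
  have hpc : ∀ i, p (c i) = none := fun i => by rw [hpdef]; simp [hc_idx i]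
  have hpinner : ∀ n, n ≠ c (idx n) → p n = some (P (idx n) (n - c (idx n))) := by
    intro n hn; rw [hpdef]; simp [hn]
  have hαget : ∀ i j (hj : j < (w i).length), α (c i + j) = (w i)[j] :=
    fun i j hj => concat_get w α hcat i j hj
  refine ⟨p, v, ⟨hp0, ?_⟩, c, hc0, hcmono, ?_, ?_⟩
  · -- transitions
    intro n
    obtain ⟨i, hi⟩ : ∃ i, idx n = i := ⟨idx n, rfl⟩
    have h1 : c i ≤ n := hi ▸ hidx_le n
    have h2 : n < c (i + 1) := hi ▸ hidx_lt n
    obtain ⟨j, hn⟩ : ∃ j, n = c i + j := ⟨n - c i, by omega⟩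
    have hj : j < (w i).length := by have := hcsucc i; omega
    have hpn : p n = if j = 0 then none else some (P i j) := by
      rw [hpdef]
      simp only [hi]
      by_cases h0 : j = 0
      · rw [if_pos (by omega), if_pos h0]
      · rw [if_neg (by omega), if_neg h0]
        congr 2
        omega
    have hsrc : (p n).getD A.q0 = P i j := by
      rw [hpn]
      by_cases h0 : j = 0
      · simp only [h0, if_pos rfl, Option.getD_none]
        exact (hP0 i).symm
      · simp [h0]
    have hv : v n = V i j := by
      rw [hvdef]
      simp only [hi]
      have heq : n - c i = j := by omega
      rw [heq]
    have htr := hPΔ i ⟨j, hj⟩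
    simp only [List.get_eq_getElem] at htr
    have hαn : α n = (w i)[j] := by rw [hn]; exact hαget i j hj
    by_cases hlast : j + 1 = (w i).length
    · -- transition into the reset state
      have hn1 : n + 1 = c (i+1) := by have := hcsucc i; omega
      refine ⟨P i (j+1), ?_, Or.inr ⟨?_, ?_⟩⟩
      · show ((p n).getD A.q0, α n, v n, P i (j+1)) ∈ A.Δ
        rw [hsrc, hv, hαn]
        exact htr
      · rw [hn1]
        exact hpc (i+1)
      · rw [hlast]
        exact hPF i
    · have hlt1 : j + 1 < (w i).length := by omega
      have hidx1 : idx (n+1) = i := hidx_eq i (n+1) (by omega) (by have := hcsucc i; omega)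
      refine ⟨P i (j+1), ?_, Or.inl ?_⟩
      · show ((p n).getD A.q0, α n, v n, P i (j+1)) ∈ A.Δ
        rw [hsrc, hv, hαn]
        exact htr
      · rw [hpdef]
        simp only [hidx1]
        rw [if_neg (by omega)]
        congr 2
        omega
  · -- the accepting positions are exactly the c i, i ≥ 1
    intro n hn
    constructor
    · intro hmem
      have hmem' : p n = none := hmem
      have hnc : n = c (idx n) := by
        by_contra hne
        rw [hpinner n hne] at hmem'
        exact Option.some_ne_none _ hmem'
      refine ⟨idx n, ?_, hnc.symm⟩
      rcases Nat.eq_zero_or_pos (idx n) with h0 | h0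
      · rw [h0, hc0] at hnc; omega
      · exact h0
    · rintro ⟨i, hi1, rfl⟩
      exact hpc i
  · -- segment sums
    intro i
    show (∑ j ∈ Finset.Ico (c i) (c (i+1)), v j) ∈ A.C
    rw [Finset.sum_Ico_eq_sum_range]
    have hlen : c (i+1) - c i = (w i).length := by have := hcsucc i; omega
    rw [hlen]
    have : ∀ j ∈ Finset.range (w i).length, v (c i + j) = V i j := by
      intro j hj
      simp only [Finset.mem_range] at hj
      have hidxj : idx (c i + j) = i := hidx_eq i _ (by omega) (by rw [hcsucc]; omega)
      rw [hvdef]; simp only [hidxj]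
      have heq : c i + j - c i = j := by omega
      rw [heq]
    rw [Finset.sum_congr rfl this]
    exact hPC i

lemma pow_backward (A : PBA Sig d) : (PowPBA A).StrongLang ⊆ OmegaPower A.FinLang := by
  intro α hα
  obtain ⟨p, v, ⟨hp0, hΔ⟩, k, hk0, hkm, hiff, hsum⟩ := hα
  have hks : ∀ i, k i < k (i+1) := fun i => hkm (Nat.lt_succ_self i)
  have hkpos : ∀ i, 1 ≤ i → 1 ≤ k i := fun i hi => by
    have := hkm (show 0 < i from hi); omega
  have hpk : ∀ i, p (k i) = none := by
    intro i
    cases i with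
    | zero => rw [hk0]; exact hp0
    | succ i => exact (hiff (k (i+1)) (hkpos _ (by omega))).2 ⟨i+1, by omega, rfl⟩
  have hpinner : ∀ i n, k i < n → n < k (i+1) → p n ≠ none := by
    intro i n h1 h2 hn
    obtain ⟨m, hm1, hm2⟩ := (hiff n (by omega)).1 hn
    rw [← hm2] at h1 h2
    have := hkm.lt_iff_lt.1 h1
    have := hkm.lt_iff_lt.1 h2
    omega
  set w : ℕ → List Sig := fun i => (List.range (k (i+1) - k i)).map (fun j => α (k i + j))
    with hwdef
  have hlen : ∀ i, (w i).length = k (i+1) - k i := fun i => by simp [hwdef]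
  have hlenpos : ∀ i, 0 < (w i).length := fun i => by rw [hlen]; have := hks i; omega
  refine ⟨w, ?_, fun i => List.length_pos_iff.1 (hlenpos i), ?_⟩
  · -- each segment word is accepted by A
    intro i
    set li := k (i+1) - k i with hli
    have hlipos : 0 < li := by have := hks i; omega
    set nlast := k i + (li - 1) with hnlast
    have hlast1 : nlast + 1 = k (i+1) := by omega
    obtain ⟨qf, hqfΔ, hqfd⟩ := hΔ nlast
    have hqfF : qf ∈ A.F := by
      rcases hqfd with hc1 | hc2
      · rw [hlast1, hpk (i+1)] at hc1; exact absurd hc1 (by simp)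
      · exact hc2.2
    set p' : ℕ → A.Q := fun j =>
      if j = 0 then A.q0 else if j < li then (p (k i + j)).getD A.q0 else qf with hp'def
    set v' : ℕ → Fin d → ℕ := fun j => v (k i + j) with hv'def
    have hsrc : ∀ j, j < li → p' j = (p (k i + j)).getD A.q0 := by
      intro j hj
      by_cases h0 : j = 0
      · subst h0; rw [hp'def]; simp [hpk i]
      · rw [hp'def]; simp [h0, hj]
    refine ⟨p', v', by rw [hp'def]; simp, ?_, ?_, ?_⟩
    · intro jj
      obtain ⟨j, hj⟩ := jj
      have hjli : j < li := by have h1 := hlen i; omega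
      have hget : (w i).get ⟨j, hj⟩ = α (k i + j) := by simp [hwdef]
      simp only [List.get_eq_getElem] at hget ⊢
      show (p' j, (w i)[j], v' j, p' (j+1)) ∈ A.Δ
      by_cases hlast : j + 1 = li
      · have hjn : k i + j = nlast := by omega
        have htgt : p' (j+1) = qf := by rw [hp'def]; simp [hlast, hlipos]; omega
        rw [htgt, hget, hsrc j hjli]
        rw [hv'def]
        simp only [hjn]
        exact hqfΔ
      · have hlt1 : j + 1 < li := by omega
        obtain ⟨q', hq'Δ, hq'd⟩ := hΔ (k i + j)
        have hpn1 : p (k i + j + 1) = some q' := by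
          rcases hq'd with hc1 | hc2
          · exact hc1
          · exact absurd hc2.1 (hpinner i (k i + j + 1) (by omega) (by omega))
        have htgt : p' (j+1) = q' := by
          rw [hp'def]; simp only [Nat.succ_ne_zero, if_false, hlt1, if_true]
          rw [show k i + (j+1) = k i + j + 1 from by omega, hpn1]; rfl
        rw [htgt, hget, hsrc j hjli]
        exact hq'Δ
    · have : (w i).length = li := hlen i
      rw [this, hp'def]
      simp only [Nat.pos_iff_ne_zero.1 hlipos, if_false, lt_irrefl, if_false]
      exact hqfF
    · rw [hlen i]
      have := hsum i
      rw [Finset.sum_Ico_eq_sum_range] at this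
      exact this
  · -- α is the concatenation of the w i
    intro n i
    have heq := flatten_eq_range_map α k hk0 (fun i => (hks i).le) n
    have heq' : ((List.range n).map w).flatten = (List.range (k n)).map α := heq
    simp only [List.get_eq_getElem]
    rw [List.getElem_of_eq heq']
    simp

end OmegaPowerAux
/-- For every Parikh-recognizable language `L`, the ω-power `L^ω` is SPBA-recognizable. -/
theorem SPBA_omega_power {Sig : Type} (L : Set (List Sig)) (h : ParikhRec L) :
    SPBARec (OmegaPower L) := by
  obtain ⟨d, A, hC, hL⟩ := h
  exact ⟨d, PowPBA A, hC, by
    rw [← hL]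
    exact subset_antisymm (pow_backward A) (pow_forward A)⟩
end

section
/- The class of SPBA-recognizable ω-languages is closed under finite union. -/
/-!
The union automaton starts in a fresh state whose first transition enters one of the given
automata, in which the run then stays. Its vectors carry the vectors of every component in
separate coordinates, plus one tag coordinate per component counting the steps taken there.
Consecutive accepting positions are distinct, so every segment of a run has a positive tag in
the component in use and zero tags elsewhere; hence a segment sum lies in
`⋃ i, embedVec i '' C i + {(t + 1) • tagVec i}` exactly when it lies in the set of its own
component. That set is semilinear because semilinear sets are closed under images by additive maps,
Minkowski sums and finite unions.
-/

open Set Pointwise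

section Semilinear

variable {d e : ℕ}

theorem isSemilinear_iff_exists_finite {S : Set (Fin d → ℕ)} :
    IsSemilinear S ↔ ∃ 𝒯 : Set (Set (Fin d → ℕ)), 𝒯.Finite ∧ (∀ T ∈ 𝒯, IsLinear T) ∧ S = ⋃₀ 𝒯 := by
  constructor
  · rintro ⟨n, T, hT, rfl⟩
    exact ⟨range T, finite_range T, forall_mem_range.2 hT, (sUnion_range T).symm⟩
  · rintro ⟨𝒯, h𝒯, hlin, rfl⟩
    obtain ⟨n, T, -, rfl⟩ := h𝒯.fin_param
    exact ⟨n, T, forall_mem_range.1 hlin, sUnion_range T⟩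

theorem IsLinear.isSemilinear {S : Set (Fin d → ℕ)} (hS : IsLinear S) : IsSemilinear S :=
  ⟨1, fun _ => S, fun _ => hS, (iUnion_const S).symm⟩

theorem IsSemilinear.iUnion {ι : Type*} [Finite ι] {S : ι → Set (Fin d → ℕ)}
    (hS : ∀ i, IsSemilinear (S i)) : IsSemilinear (⋃ i, S i) := by
  choose 𝒯 h𝒯 hlin hS using fun i => isSemilinear_iff_exists_finite.1 (hS i)
  refine isSemilinear_iff_exists_finite.2 ⟨⋃ i, 𝒯 i, finite_iUnion h𝒯, ?_, ?_⟩
  · intro T hT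
    obtain ⟨i, hi⟩ := mem_iUnion.1 hT
    exact hlin i T hi
  · rw [sUnion_iUnion]; exact iUnion_congr hS

theorem IsLinear.image {S : Set (Fin d → ℕ)} (hS : IsLinear S) (f : (Fin d → ℕ) →+ (Fin e → ℕ)) :
    IsLinear (f '' S) := by
  obtain ⟨b₀, ℓ, b, rfl⟩ := hS
  refine ⟨f b₀, ℓ, fun i => f (b i), ?_⟩
  ext u
  simp only [mem_image, mem_ofPred_eq]
  constructor
  · rintro ⟨_, ⟨z, rfl⟩, rfl⟩
    exact ⟨z, by simp only [map_add, map_sum, map_nsmul]⟩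
  · rintro ⟨z, rfl⟩
    exact ⟨_, ⟨z, rfl⟩, by simp only [map_add, map_sum, map_nsmul]⟩

theorem IsSemilinear.image {S : Set (Fin d → ℕ)} (hS : IsSemilinear S)
    (f : (Fin d → ℕ) →+ (Fin e → ℕ)) : IsSemilinear (f '' S) := by
  obtain ⟨n, T, hT, rfl⟩ := hS
  rw [image_iUnion]
  exact IsSemilinear.iUnion fun i => ((hT i).image f).isSemilinear

theorem IsLinear.add {S T : Set (Fin d → ℕ)} (hS : IsLinear S) (hT : IsLinear T) :
    IsLinear (S + T) := by
  obtain ⟨b₀, ℓ, b, rfl⟩ := hS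
  obtain ⟨c₀, m, c, rfl⟩ := hT
  refine ⟨b₀ + c₀, ℓ + m, Fin.append b c, ?_⟩
  ext u
  simp only [mem_add, mem_ofPred_eq, Fin.sum_univ_add, Fin.append_left, Fin.append_right]
  constructor
  · rintro ⟨_, ⟨y, rfl⟩, _, ⟨z, rfl⟩, rfl⟩
    exact ⟨Fin.append y z, by simp only [Fin.append_left, Fin.append_right]; abel⟩
  · rintro ⟨z, rfl⟩
    exact ⟨_, ⟨fun i => z (Fin.castAdd m i), rfl⟩, _, ⟨fun i => z (Fin.natAdd ℓ i), rfl⟩, by abel⟩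

theorem IsSemilinear.add {S T : Set (Fin d → ℕ)} (hS : IsSemilinear S) (hT : IsSemilinear T) :
    IsSemilinear (S + T) := by
  obtain ⟨n, S, hS, rfl⟩ := hS
  obtain ⟨m, T, hT, rfl⟩ := hT
  simp only [iUnion_add, add_iUnion]
  exact IsSemilinear.iUnion fun j => IsSemilinear.iUnion fun i => ((hS i).add (hT j)).isSemilinear

theorem isLinear_range_succ_nsmul (w : Fin d → ℕ) : IsLinear (range fun t : ℕ => (t + 1) • w) := by
  refine ⟨w, 1, fun _ => w, ?_⟩
  ext u
  simp only [mem_range, mem_ofPred_eq, Fin.sum_univ_one, succ_nsmul']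
  exact ⟨fun ⟨t, ht⟩ => ⟨fun _ => t, ht.symm⟩, fun ⟨z, hz⟩ => ⟨z 0, hz.symm⟩⟩

end Semilinear

theorem strongCond_congr {Q Q' : Type} {d d' : ℕ} {F : Set Q} {C : Q → Set (Fin d → ℕ)}
    {p : ℕ → Q} {v : ℕ → Fin d → ℕ} {F' : Set Q'} {C' : Q' → Set (Fin d' → ℕ)} {p' : ℕ → Q'}
    {v' : ℕ → Fin d' → ℕ} (hF : ∀ n, 1 ≤ n → (p n ∈ F ↔ p' n ∈ F'))
    (hC : ∀ m n, m < n →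
      ((∑ j ∈ Finset.Ico m n, v j) ∈ C (p n) ↔ (∑ j ∈ Finset.Ico m n, v' j) ∈ C' (p' n))) :
    StrongCond F C p v ↔ StrongCond F' C' p' v' :=
  exists_congr fun k => and_congr_right fun _ => and_congr_right fun hk =>
    and_congr (forall₂_congr fun n hn => by rw [hF n hn])
      (forall_congr' fun i => hC _ _ (hk i.lt_succ_self))

def liftRun {ι : Type} {Q : ι → Type} (i : ι) (p : ℕ → Q i) : ℕ → Option (Σ i, Q i)
  | 0 => none
  | n + 1 => some ⟨i, p (n + 1)⟩

namespace PBA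

section Union

variable {ι Sig : Type} [Fintype ι] {d : ι → ℕ}

/-- Coordinates of the vectors of the union automaton: `⟨i, some c⟩` carries coordinate `c` of
component `i`, and `⟨i, none⟩` counts the steps taken in component `i`. -/
abbrev UnionIndex (d : ι → ℕ) : Type := Σ i, Option (Fin (d i))

noncomputable def unionCoord (d : ι → ℕ) : UnionIndex d ≃ Fin (Fintype.card (UnionIndex d)) :=
  Fintype.equivFin _

noncomputable def embedVec (i : ι) : (Fin (d i) → ℕ) →+ (Fin (Fintype.card (UnionIndex d)) → ℕ) :=
  Function.ExtendByZero.hom ℕ fun c => unionCoord d ⟨i, some c⟩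

noncomputable def tagVec (i : ι) : Fin (Fintype.card (UnionIndex d)) → ℕ :=
  Pi.single (unionCoord d ⟨i, none⟩) 1

noncomputable def stepVec (i : ι) (x : Fin (d i) → ℕ) : Fin (Fintype.card (UnionIndex d)) → ℕ :=
  embedVec i x + tagVec i

theorem embedVec_apply_some (i : ι) (x : Fin (d i) → ℕ) (c : Fin (d i)) :
    embedVec i x (unionCoord d ⟨i, some c⟩) = x c :=
  ((unionCoord d).injective.comp (sigma_mk_injective.comp (Option.some_injective _))).extend_apply
    x 0 c

theorem embedVec_apply_none (i j : ι) (x : Fin (d i) → ℕ) :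
    embedVec i x (unionCoord d ⟨j, none⟩) = 0 :=
  Function.extend_apply' _ _ _ fun ⟨_, hc⟩ => by cases (unionCoord d).injective hc

theorem tagVec_apply_some (i j : ι) (c : Fin (d j)) : tagVec i (unionCoord d ⟨j, some c⟩) = 0 :=
  Pi.single_eq_of_ne (fun hc => by cases (unionCoord d).injective hc) 1

theorem tagVec_apply_none_self (i : ι) : tagVec (d := d) i (unionCoord d ⟨i, none⟩) = 1 :=
  Pi.single_eq_same _ 1

theorem tagVec_apply_none_of_ne {i j : ι} (h : j ≠ i) :
    tagVec (d := d) i (unionCoord d ⟨j, none⟩) = 0 :=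
  Pi.single_eq_of_ne (fun hc => h (congrArg Sigma.fst ((unionCoord d).injective hc))) 1

theorem sum_stepVec (i : ι) (v : ℕ → Fin (d i) → ℕ) (s : Finset ℕ) :
    ∑ j ∈ s, stepVec i (v j) = embedVec i (∑ j ∈ s, v j) + s.card • tagVec i := by
  simp only [stepVec, Finset.sum_add_distrib, map_sum, Finset.sum_const]

def unionC (C : ∀ i, Set (Fin (d i) → ℕ)) : Set (Fin (Fintype.card (UnionIndex d)) → ℕ) :=
  ⋃ i, (embedVec i '' C i + range fun t : ℕ => (t + 1) • tagVec i)

theorem isSemilinear_unionC {C : ∀ i, Set (Fin (d i) → ℕ)} (hC : ∀ i, IsSemilinear (C i)) :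
    IsSemilinear (unionC C) :=
  IsSemilinear.iUnion fun i => ((hC i).image _).add (isLinear_range_succ_nsmul _).isSemilinear

theorem embedVec_add_nsmul_tagVec_mem_unionC_iff {C : ∀ i, Set (Fin (d i) → ℕ)} {i : ι}
    {x : Fin (d i) → ℕ} {s : ℕ} (hs : s ≠ 0) :
    embedVec i x + s • tagVec i ∈ unionC C ↔ x ∈ C i := by
  constructor
  · intro h
    simp only [unionC, mem_iUnion, mem_add, mem_image, mem_range] at h
    obtain ⟨j, _, ⟨y, hy, rfl⟩, _, ⟨t, rfl⟩, heq⟩ := h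
    obtain rfl : j = i := by
      by_contra hne
      have := congrFun heq (unionCoord d ⟨i, none⟩)
      simp only [Pi.add_apply, Pi.smul_apply, embedVec_apply_none, tagVec_apply_none_self,
        tagVec_apply_none_of_ne (Ne.symm hne), smul_eq_mul, mul_one, zero_add] at this
      exact hs this.symm
    convert hy using 1
    funext c
    simpa only [Pi.add_apply, Pi.smul_apply, embedVec_apply_some, tagVec_apply_some, smul_zero,
      add_zero] using (congrFun heq (unionCoord d ⟨j, some c⟩)).symm
  · intro hx
    refine mem_iUnion.2 ⟨i, mem_add.2 ⟨_, mem_image_of_mem _ hx, _, ⟨s - 1, ?_⟩, rfl⟩⟩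
    show (s - 1 + 1) • _ = _
    rw [Nat.sub_add_cancel (Nat.one_le_iff_ne_zero.2 hs)]

variable (A : ∀ i, PBA Sig (d i))

/-- The fresh initial state `none` may start a run of any component `i` with a transition
leaving `(A i).q0`; every step taken in component `i` is counted in its tag coordinate. -/
noncomputable def union : PBA Sig (Fintype.card (UnionIndex d)) where
  Q := Option (Σ i, (A i).Q)
  fin := inferInstance
  q0 := none
  Δ := {t | ∃ i q x q', (q, t.2.1, x, q') ∈ (A i).Δ ∧
    (t.1 = some ⟨i, q⟩ ∨ t.1 = none ∧ q = (A i).q0) ∧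
    t.2.2.1 = stepVec i x ∧ t.2.2.2 = some ⟨i, q'⟩}
  F := {s | ∃ i, ∃ q ∈ (A i).F, s = some ⟨i, q⟩}
  C := unionC fun i => (A i).C

variable {A}

theorem some_mem_union_F_iff {i : ι} {q : (A i).Q} :
    (some ⟨i, q⟩ : (union A).Q) ∈ (union A).F ↔ q ∈ (A i).F := by
  constructor
  · rintro ⟨j, q', hq', heq⟩
    cases heq
    exact hq'
  · exact fun hq => ⟨i, q, hq, rfl⟩

theorem isRun_union_liftRun {i : ι} {α : ℕ → Sig} {p : ℕ → (A i).Q} {v : ℕ → Fin (d i) → ℕ}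
    (h : IsRun (A i).q0 (A i).Δ α p v) :
    IsRun (union A).q0 (union A).Δ α (liftRun i p) fun n => stepVec i (v n) := by
  refine ⟨rfl, fun n => ⟨i, p n, v n, p (n + 1), h.2 n, ?_, rfl, rfl⟩⟩
  rcases n with _ | n
  · exact Or.inr ⟨rfl, h.1⟩
  · exact Or.inl rfl

theorem exists_forall_eq_some_of_isRun_union {α : ℕ → Sig} {p' : ℕ → (union A).Q}
    {v' : ℕ → Fin (Fintype.card (UnionIndex d)) → ℕ}
    (h : IsRun (union A).q0 (union A).Δ α p' v') :
    ∃ i, ∀ n, ∃ q, p' (n + 1) = some ⟨i, q⟩ := by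
  obtain ⟨i, -, -, q₁, -, -, -, hq₁⟩ := h.2 0
  refine ⟨i, fun n => ?_⟩
  induction n with
  | zero => exact ⟨q₁, hq₁⟩
  | succ n ih =>
    obtain ⟨q, hq⟩ := ih
    obtain ⟨j, q₀, -, q', -, hsrc | ⟨hnone, -⟩, -, htgt⟩ := h.2 (n + 1)
    · rw [hq] at hsrc
      cases hsrc
      exact ⟨q', htgt⟩
    · rw [hq] at hnone
      cases hnone

theorem exists_isRun_of_isRun_union {α : ℕ → Sig} {p' : ℕ → (union A).Q}
    {v' : ℕ → Fin (Fintype.card (UnionIndex d)) → ℕ}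
    (h : IsRun (union A).q0 (union A).Δ α p' v') :
    ∃ i p v, IsRun (A i).q0 (A i).Δ α p v ∧ p' = liftRun i p ∧ v' = fun n => stepVec i (v n) := by
  obtain ⟨i, hcomp⟩ := exists_forall_eq_some_of_isRun_union h
  obtain ⟨hp0, hstep⟩ := h
  choose q hq using hcomp
  let p : ℕ → (A i).Q
    | 0 => (A i).q0
    | n + 1 => q n
  have hstep' : ∀ n, ∃ x, (p n, α n, x, p (n + 1)) ∈ (A i).Δ ∧ v' n = stepVec i x := by
    intro n
    obtain ⟨j, q₀, x, q', hΔ, hsrc, hv, htgt⟩ := hstep n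
    rw [hq n] at htgt
    cases htgt
    rcases n with _ | m
    · rw [hp0] at hsrc
      rcases hsrc with hsrc | ⟨-, rfl⟩
      · cases hsrc
      · exact ⟨x, hΔ, hv⟩
    · rw [hq m] at hsrc
      rcases hsrc with hsrc | ⟨hsrc, -⟩
      · cases hsrc
        exact ⟨x, hΔ, hv⟩
      · cases hsrc
  choose v hv using hstep'
  refine ⟨i, p, v, ⟨rfl, fun n => (hv n).1⟩, funext fun n => ?_, funext fun n => (hv n).2⟩
  rcases n with _ | n
  exacts [hp0, hq n]

theorem strongCond_liftRun_union_iff {i : ι} {p : ℕ → (A i).Q} {v : ℕ → Fin (d i) → ℕ} :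
    StrongCond (union A).F (fun _ => (union A).C) (liftRun i p) (fun n => stepVec i (v n)) ↔
      StrongCond (A i).F (fun _ => (A i).C) p v := by
  refine (strongCond_congr (fun n hn => ?_) fun m n hmn => ?_).symm
  · obtain ⟨n, rfl⟩ := Nat.exists_eq_add_of_le' hn
    exact some_mem_union_F_iff.symm
  · rw [sum_stepVec]
    refine (embedVec_add_nsmul_tagVec_mem_unionC_iff (C := fun i => (A i).C) ?_).symm
    rw [Nat.card_Ico]
    omega

theorem strongLang_union : (union A).StrongLang = ⋃ i, (A i).StrongLang := by
  ext α
  simp only [mem_iUnion]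
  constructor
  · rintro ⟨p', v', hrun', hacc⟩
    obtain ⟨i, p, v, hrun, rfl, rfl⟩ := exists_isRun_of_isRun_union hrun'
    exact ⟨i, p, v, hrun, strongCond_liftRun_union_iff.1 hacc⟩
  · rintro ⟨i, p, v, hrun, hacc⟩
    exact ⟨liftRun i p, _, isRun_union_liftRun hrun, strongCond_liftRun_union_iff.2 hacc⟩

end Union

end PBA

theorem SPBARec.iUnion {ι Sig : Type} [Finite ι] {L : ι → Set (ℕ → Sig)}
    (h : ∀ i, SPBARec (L i)) : SPBARec (⋃ i, L i) := by
  have := Fintype.ofFinite ι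
  choose d A hC hL using h
  refine ⟨_, PBA.union A, PBA.isSemilinear_unionC hC, ?_⟩
  rw [PBA.strongLang_union]
  exact iUnion_congr hL

/-- The class of SPBA-recognizable ω-languages is closed under (finite) union. -/
theorem SPBA_closed_union {Sig : Type} (L₁ L₂ : Set (ℕ → Sig))
    (h₁ : SPBARec L₁) (h₂ : SPBARec L₂) : SPBARec (L₁ ∪ L₂) := by
  rw [union_eq_iUnion]
  exact SPBARec.iUnion (Bool.forall_bool.2 ⟨h₂, h₁⟩)
end

section
/- If an ε-MSPBA A recognizes a nonempty ω-language, then A accepts an ultimately periodic word, i.e., a word of the form u·v^ω with u ∈ Σ* and v ∈ Σ⁺. -/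
-- AUX
section AUX
def cnt (reads : ℕ → Bool) (a b : ℕ) : ℕ :=
  ∑ x ∈ Finset.Ico a b, (if reads x = true then 1 else 0)

lemma readCount_eq_cnt (reads : ℕ → Bool) (n : ℕ) : readCount reads n = cnt reads 0 n := by
  unfold readCount cnt
  rw [Finset.range_eq_Ico, Finset.card_filter]

lemma cnt_split (reads : ℕ → Bool) {a b c : ℕ} (hab : a ≤ b) (hbc : b ≤ c) :
    cnt reads a c = cnt reads a b + cnt reads b c :=
  (Finset.sum_Ico_consecutive _ hab hbc).symm

lemma cnt_succ (reads : ℕ → Bool) {a b : ℕ} (h : a ≤ b) :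
    cnt reads a (b + 1) = cnt reads a b + (if reads b = true then 1 else 0) :=
  Finset.sum_Ico_succ_top h _

lemma cnt_bot (reads : ℕ → Bool) {a b : ℕ} (h : a < b) :
    cnt reads a b = (if reads a = true then 1 else 0) + cnt reads (a + 1) b :=
  Finset.sum_eq_sum_Ico_succ_bot h _

lemma cnt_congr {r1 r2 : ℕ → Bool} {a b : ℕ} (h : ∀ x, a ≤ x → x < b → r1 x = r2 x) :
    cnt r1 a b = cnt r2 a b := by
  refine Finset.sum_congr rfl fun x hx => ?_
  rw [Finset.mem_Ico] at hx
  rw [h x hx.1 hx.2]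

lemma cnt_le (reads : ℕ → Bool) {a b c : ℕ} (hab : a ≤ b) (hbc : b ≤ c) :
    cnt reads a b ≤ cnt reads a c := by
  rw [cnt_split reads hab hbc]; omega

lemma cnt_pos (reads : ℕ → Bool) {a b r : ℕ} (hr : reads r = true) (har : a ≤ r) (hrb : r < b) :
    1 ≤ cnt reads a b := by
  have h1 : cnt reads a (r + 1) = cnt reads a r + 1 := by
    rw [cnt_succ reads har, hr]; simp
  have h2 : cnt reads a (r + 1) ≤ cnt reads a b :=
    cnt_le reads (le_trans har (Nat.le_succ r)) (by omega : r + 1 ≤ b)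
  omega

def pumpIdx (K L n : ℕ) : ℕ := if n < K then n else K + (n - K) % L

lemma pumpIdx_eq_self {K L n : ℕ} (h : n < K + L) : pumpIdx K L n = n := by
  unfold pumpIdx
  split
  · rfl
  · rename_i hn
    push_neg at hn
    rw [Nat.mod_eq_of_lt (by omega)]
    omega

lemma pumpIdx_ge {K L n : ℕ} (h : K ≤ n) : pumpIdx K L n = K + (n - K) % L := by
  unfold pumpIdx; split <;> omega

lemma pumpIdx_add_mul {K L n : ℕ} (c : ℕ) (h : K ≤ n) :
    pumpIdx K L (n + c * L) = pumpIdx K L n := by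
  rw [pumpIdx_ge (by omega), pumpIdx_ge h]
  congr 1
  rw [show n + c * L - K = (n - K) + c * L by omega, Nat.add_mul_mod_self_right]

lemma pumpIdx_lt {K L n : ℕ} (hL : 0 < L) : pumpIdx K L n < K + L := by
  unfold pumpIdx
  split
  · omega
  · have := Nat.mod_lt (n - K) hL
    omega

lemma sum_Ico_add_right {M : Type*} [AddCommMonoid M] (f : ℕ → M) (a b c : ℕ) :
    ∑ x ∈ Finset.Ico (a + c) (b + c), f x = ∑ x ∈ Finset.Ico a b, f (x + c) := by
  rw [Finset.sum_Ico_eq_sum_range, Finset.sum_Ico_eq_sum_range, Nat.add_sub_add_right]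
  exact Finset.sum_congr rfl fun i _ => by rw [Nat.add_right_comm]
end AUX

/-- If an ε-MSPBA recognizes a nonempty ω-language, then it accepts an ultimately
periodic word, i.e. a word of the form `u·v^ω` with `v` nonempty (equivalently, a word
`α` that is eventually periodic: `α (n + t) = α n` for all `n ≥ m`, for some period `t > 0`). -/
theorem epsMSPBA_nonempty_ultimately_periodic {Sig : Type} {d : ℕ} (A : EpsMPBA Sig d)
    (hC : ∀ q, IsSemilinear (A.C q)) (h : A.StrongLang.Nonempty) :
    ∃ α ∈ A.StrongLang, ∃ m t : ℕ, 0 < t ∧ ∀ n, m ≤ n → α (n + t) = α n := by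
  obtain ⟨α, p, v, reads, ⟨hp0, hinf, hstep⟩, k, hk0, hkm, hkF, hkC⟩ := h
  -- pigeonhole: a state occurring infinitely often at accepting positions
  obtain ⟨q, hq⟩ := Finite.exists_infinite_fiber (fun a => p (k a))
  rw [Set.infinite_coe_iff] at hq
  obtain ⟨i, hiq, hi0⟩ := hq.exists_gt 0
  obtain ⟨r, hrK, hr⟩ := hinf (k i)
  obtain ⟨j, hjq, hj⟩ := hq.exists_gt r
  simp only [Set.mem_preimage, Set.mem_singleton_iff] at hiq hjq
  have hkj : r < k j := lt_of_lt_of_le hj hkm.le_apply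
  have hij : i < j := hkm.lt_iff_lt.mp (lt_of_le_of_lt hrK hkj)
  set K := k i with hKdef
  set J := k j with hJdef
  set L := J - K with hLdef
  have hKJ : K < J := hkm hij
  have hL : 0 < L := by omega
  have hJKL : J = K + L := by omega
  have hqq : p K = p J := hiq.trans hjq.symm
  set P := j - i with hPdef
  have hP : 0 < P := by omega
  have hK1 : 1 ≤ K := le_trans hi0 hkm.le_apply
  set p' : ℕ → A.Q := fun n => p (pumpIdx K L n) with hp'def
  set v' : ℕ → Fin d → ℕ := fun n => v (pumpIdx K L n) with hv'def
  set reads' : ℕ → Bool := fun n => reads (pumpIdx K L n) with hr'def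
  set R0 := readCount reads K with hR0def
  set Rb := cnt reads K J with hRbdef
  set α' : ℕ → Sig := fun s => if s < R0 then α s else α (R0 + (s - R0) % Rb) with hα'def
  have hRb : 0 < Rb := cnt_pos reads hr hrK hkj
  -- readCount computations
  have hrcLow : ∀ n, n ≤ J → readCount reads' n = readCount reads n := by
    intro n hn
    rw [readCount_eq_cnt, readCount_eq_cnt]
    refine cnt_congr fun x _ hx => ?_
    show reads (pumpIdx K L x) = reads x
    rw [pumpIdx_eq_self (by omega)]
  have hWin : ∀ n, K ≤ n → cnt reads' n (n + L) = Rb := by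
    intro n hn
    induction n, hn using Nat.le_induction with
    | base =>
      rw [hRbdef, hJKL]
      refine cnt_congr fun x _ hx => ?_
      show reads (pumpIdx K L x) = reads x
      rw [pumpIdx_eq_self (by omega)]
    | succ n hn ih =>
      have h1 : cnt reads' n (n + L) =
          (if reads' n = true then 1 else 0) + cnt reads' (n + 1) (n + L) :=
        cnt_bot reads' (by omega)
      have h2 : cnt reads' (n + 1) (n + 1 + L) =
          cnt reads' (n + 1) (n + L) + (if reads' (n + L) = true then 1 else 0) := by
        rw [show n + 1 + L = (n + L) + 1 by omega]
        exact cnt_succ reads' (by omega)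
      have h3 : reads' (n + L) = reads' n := by
        show reads (pumpIdx K L (n + L)) = reads (pumpIdx K L n)
        rw [show n + L = n + 1 * L by omega, pumpIdx_add_mul 1 hn]
      rw [h2, h3]
      omega
  have hrc2 : ∀ n, K ≤ n → readCount reads' (n + L) = readCount reads' n + Rb := by
    intro n hn
    rw [readCount_eq_cnt, readCount_eq_cnt,
      cnt_split reads' (Nat.zero_le n) (by omega : n ≤ n + L), hWin n hn]
  have hrc3 : ∀ c n, K ≤ n → readCount reads' (n + c * L) = readCount reads' n + c * Rb := by
    intro c
    induction c with
    | zero => simp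
    | succ c ih =>
      intro n hn
      have : n + (c + 1) * L = (n + c * L) + L := by ring
      rw [this, hrc2 (n + c * L) (by omega), ih n hn]
      ring
  have hrcMain : ∀ m c, m < L →
      readCount reads' (K + m + c * L) = R0 + cnt reads K (K + m) + c * Rb := by
    intro m c hm
    rw [hrc3 c (K + m) (by omega), hrcLow (K + m) (by omega),
      readCount_eq_cnt, cnt_split reads (Nat.zero_le K) (by omega : K ≤ K + m),
      ← readCount_eq_cnt]
  have hdecomp : ∀ n, K ≤ n → ∃ m c, m < L ∧ n = K + m + c * L := by
    intro n hn
    refine ⟨(n - K) % L, (n - K) / L, Nat.mod_lt _ hL, ?_⟩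
    have h2 : (n - K) / L * L + (n - K) % L = n - K := Nat.div_add_mod' (n - K) L
    omega
  have hαlow : ∀ s, s ≤ R0 → α' s = α s := by
    intro s hs
    rw [hα'def]
    simp only
    split
    · rfl
    · have : s = R0 := by omega
      subst this
      simp
  have hαmid : ∀ c s, s < Rb → α' (R0 + (c * Rb + s)) = α (R0 + s) := by
    intro c s hs
    rw [hα'def]
    simp only
    rw [if_neg (by omega), Nat.add_sub_cancel_left, Nat.add_comm (c * Rb) s,
      Nat.add_mul_mod_self_right, Nat.mod_eq_of_lt hs]
  -- the pumped run is a run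
  have hpiJ : ∀ n, pumpIdx K L n < J := fun n => by
    have := pumpIdx_lt (K := K) (L := L) (n := n) hL; omega
  have hstep' : ∀ n, if reads' n = true then
      (p' n, α' (readCount reads' n), v' n, p' (n + 1)) ∈ A.Δ
      else (p' n, v' n, p' (n + 1)) ∈ A.E := by
    intro n
    by_cases hnK : n < K
    · have e1 : pumpIdx K L n = n := pumpIdx_eq_self (by omega)
      have e2 : pumpIdx K L (n + 1) = n + 1 := pumpIdx_eq_self (by omega)
      have e3 : readCount reads' n = readCount reads n := hrcLow n (by omega)
      have e4 : α' (readCount reads n) = α (readCount reads n) := by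
        refine hαlow _ ?_
        rw [hR0def, readCount_eq_cnt, readCount_eq_cnt]
        exact cnt_le reads (Nat.zero_le n) (by omega)
      show (if reads (pumpIdx K L n) = true then _ else _)
      rw [e1]
      have := hstep n
      split at this <;> rename_i hre
      · rw [if_pos hre]
        show (p (pumpIdx K L n), α' (readCount reads' n), v (pumpIdx K L n),
          p (pumpIdx K L (n+1))) ∈ A.Δ
        rw [e1, e2, e3, e4]
        exact this
      · rw [if_neg hre]
        show (p (pumpIdx K L n), v (pumpIdx K L n), p (pumpIdx K L (n+1))) ∈ A.E
        rw [e1, e2]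
        exact this
    · push_neg at hnK
      obtain ⟨m, c, hm, hn⟩ := hdecomp n hnK
      have e1 : pumpIdx K L n = K + m := by
        rw [hn, pumpIdx_add_mul c (by omega), pumpIdx_eq_self (by omega)]
      have e2 : pumpIdx K L (n + 1) = pumpIdx K L (K + m + 1) := by
        rw [hn, show K + m + c * L + 1 = (K + m + 1) + c * L by ring,
          pumpIdx_add_mul c (by omega)]
      have e3 : p (pumpIdx K L (n + 1)) = p (K + m + 1) := by
        rw [e2]
        by_cases hm1 : m + 1 < L
        · rw [pumpIdx_eq_self (by omega)]
        · have hm1' : m + 1 = L := by omega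
          have : pumpIdx K L (K + m + 1) = K := by
            rw [pumpIdx_ge (by omega)]
            have : K + m + 1 - K = L := by omega
            rw [this, Nat.mod_self]
            omega
          rw [this]
          have : K + m + 1 = J := by omega
          rw [this]
          exact hqq
      have e4 : readCount reads' n = R0 + cnt reads K (K + m) + c * Rb := by
        rw [hn]; exact hrcMain m c hm
      have e5 : readCount reads (K + m) = R0 + cnt reads K (K + m) := by
        rw [hR0def, readCount_eq_cnt, readCount_eq_cnt,
          cnt_split reads (Nat.zero_le K) (by omega : K ≤ K + m)]
      show (if reads (pumpIdx K L n) = true then _ else _)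
      rw [e1]
      have := hstep (K + m)
      split at this <;> rename_i hre
      · rw [if_pos hre]
        show (p (pumpIdx K L n), α' (readCount reads' n), v (pumpIdx K L n),
          p (pumpIdx K L (n+1))) ∈ A.Δ
        have hsRb : cnt reads K (K + m) < Rb := by
          have hc1 : cnt reads K (K + m + 1) = cnt reads K (K + m) + 1 := by
            rw [cnt_succ reads (by omega : K ≤ K + m), hre]; simp
          have hc2 : cnt reads K (K + m + 1) ≤ Rb :=
            cnt_le reads (by omega) (by omega : K + m + 1 ≤ J)
          omega
        have e6 : α' (readCount reads' n) = α (readCount reads (K + m)) := by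
          rw [e4, e5, show R0 + cnt reads K (K + m) + c * Rb
            = R0 + (c * Rb + cnt reads K (K + m)) by ring]
          exact hαmid c _ hsRb
        rw [e1, e3, e6]
        exact this
      · rw [if_neg hre]
        show (p (pumpIdx K L n), v (pumpIdx K L n), p (pumpIdx K L (n+1))) ∈ A.E
        rw [e1, e3]
        exact this
  have hrun' : IsEpsRun A.q0 A.Δ A.E α' p' v' reads' := by
    refine ⟨?_, ?_, hstep'⟩
    · show p (pumpIdx K L 0) = A.q0
      rw [pumpIdx_eq_self (by omega)]
      exact hp0
    · intro N
      refine ⟨r + N * L, ?_, ?_⟩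
      · have : N ≤ N * L := Nat.le_mul_of_pos_right N hL
        omega
      · show reads (pumpIdx K L (r + N * L)) = true
        rw [pumpIdx_add_mul N hrK, pumpIdx_eq_self (by omega)]
        exact hr
  -- the new accepting-position sequence
  set k' : ℕ → ℕ := fun b => if b ≤ i then k b
    else k (i + (b - i) % P) + ((b - i) / P) * L with hk'def
  have hkJeq : k j = k i + L := by omega
  have hk'ge : ∀ b, i ≤ b → k' b = k (i + (b - i) % P) + ((b - i) / P) * L := by
    intro b hb
    by_cases hbi : b ≤ i
    · have hbi' : b = i := by omega
      subst hbi'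
      rw [hk'def]
      simp only
      rw [if_pos (le_refl b), Nat.sub_self]
      simp
    · rw [hk'def]
      simp only
      rw [if_neg hbi]
  have hk'succ : ∀ b, i ≤ b → k' (b + 1)
      = k (i + (b - i) % P + 1) + ((b - i) / P) * L := by
    intro b hb
    have hsP : (b - i) % P < P := Nat.mod_lt _ hP
    have hbi : b - i = P * ((b - i) / P) + (b - i) % P := (Nat.div_add_mod (b - i) P).symm
    have hb1 : b + 1 - i = P * ((b - i) / P) + ((b - i) % P + 1) := by omega
    rw [hk'ge (b + 1) (by omega)]
    by_cases hsp : (b - i) % P + 1 < P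
    · have e1 : (b + 1 - i) % P = (b - i) % P + 1 := by
        rw [hb1, Nat.mul_add_mod, Nat.mod_eq_of_lt hsp]
      have e2 : (b + 1 - i) / P = (b - i) / P := by
        rw [hb1, Nat.mul_add_div hP, Nat.div_eq_of_lt hsp]
        omega
      rw [e1, e2, ← Nat.add_assoc]
    · have hsp' : (b - i) % P + 1 = P := by omega
      have hb1' : b + 1 - i = P * ((b - i) / P + 1) := by
        rw [hb1, hsp']; ring
      have e1 : (b + 1 - i) % P = 0 := by rw [hb1', Nat.mul_mod_right]
      have e2 : (b + 1 - i) / P = (b - i) / P + 1 := by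
        rw [hb1', Nat.mul_div_cancel_left _ hP]
      rw [e1, e2]
      have ej : i + (b - i) % P + 1 = j := by omega
      rw [ej, Nat.add_zero, hkJeq]
      ring
  have hk'0 : k' 0 = 0 := by
    rw [hk'def]
    simp only
    rw [if_pos (Nat.zero_le i)]
    exact hk0
  have hk'mono : StrictMono k' := by
    refine strictMono_nat_of_lt_succ fun b => ?_
    by_cases hb : b + 1 ≤ i
    · rw [hk'def]
      simp only
      rw [if_pos (by omega : b ≤ i), if_pos hb]
      exact hkm (by omega)
    · have hbi : i ≤ b := by omega
      rw [hk'ge b hbi, hk'succ b hbi]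
      have := hkm (show i + (b - i) % P < i + (b - i) % P + 1 by omega)
      omega
  -- evaluation of p' at pumped positions
  have hp'low : ∀ x, x < J → p' x = p x := by
    intro x hx
    show p (pumpIdx K L x) = p x
    rw [pumpIdx_eq_self (by omega)]
  have hp'add : ∀ x c, K ≤ x → x < J → p' (x + c * L) = p x := by
    intro x c hx1 hx2
    show p (pumpIdx K L (x + c * L)) = p x
    rw [pumpIdx_add_mul c hx1, pumpIdx_eq_self (by omega)]
  have hp'Jadd : ∀ c, p' (J + c * L) = p J := by
    intro c
    show p (pumpIdx K L (J + c * L)) = p J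
    have e : J + c * L = K + (1 + c) * L := by rw [hJKL]; ring
    rw [e, pumpIdx_add_mul (1 + c) (le_refl K), pumpIdx_eq_self (by omega)]
    exact hqq
  -- enumeration of accepting positions
  have hkF' : ∀ n, 1 ≤ n → (p' n ∈ A.F ↔ ∃ b, 1 ≤ b ∧ k' b = n) := by
    intro n hn1
    constructor
    · intro hF
      by_cases hnK : n < K
      · have hpF : p n ∈ A.F := by rwa [hp'low n (by omega)] at hF
        obtain ⟨a, ha1, hka⟩ := (hkF n hn1).mp hpF
        have hai : a < i := hkm.lt_iff_lt.mp (by omega : k a < k i)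
        refine ⟨a, ha1, ?_⟩
        rw [hk'def]
        simp only
        rw [if_pos (by omega : a ≤ i)]
        exact hka
      · push_neg at hnK
        obtain ⟨m, c, hm, hn⟩ := hdecomp n hnK
        have hpn : p' n = p (K + m) := by
          show p (pumpIdx K L n) = _
          rw [hn, pumpIdx_add_mul c (by omega), pumpIdx_eq_self (by omega)]
        have hF2 : p (K + m) ∈ A.F := by rwa [hpn] at hF
        obtain ⟨a, ha1, hka⟩ := (hkF (K + m) (by omega)).mp hF2
        have hai : i ≤ a := hkm.le_iff_le.mp (by omega : k i ≤ k a)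
        have haj : a < j := hkm.lt_iff_lt.mp (by omega : k a < k j)
        refine ⟨i + (P * c + (a - i)), by omega, ?_⟩
        rw [hk'ge _ (by omega), Nat.add_sub_cancel_left]
        have e1 : (P * c + (a - i)) % P = a - i := by
          rw [Nat.mul_add_mod]; exact Nat.mod_eq_of_lt (by omega)
        have e2 : (P * c + (a - i)) / P = c := by
          rw [Nat.mul_add_div hP, Nat.div_eq_of_lt (by omega : a - i < P)]
          omega
        rw [e1, e2, show i + (a - i) = a by omega, hka]
        omega
    · rintro ⟨b, hb1, hkb⟩
      by_cases hbi : b ≤ i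
      · have hb' : k' b = k b := by
          rw [hk'def]; simp only; rw [if_pos hbi]
        have hnb : n = k b := by omega
        have hkbK : k b ≤ k i := hkm.monotone hbi
        rw [hp'low n (by omega), hnb]
        exact (hkF (k b) (by omega)).mpr ⟨b, hb1, rfl⟩
      · push_neg at hbi
        have hbi' : i ≤ b := by omega
        have hsP : (b - i) % P < P := Nat.mod_lt _ hP
        have hkb' : k' b = k (i + (b - i) % P) + ((b - i) / P) * L := hk'ge b hbi'
        have hksJ : k (i + (b - i) % P) < k j := hkm (by omega : i + (b - i) % P < j)
        have hksK : k i ≤ k (i + (b - i) % P) := hkm.monotone (by omega)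
        have hpv : p' n = p (k (i + (b - i) % P)) := by
          rw [← hkb, hkb']
          exact hp'add _ _ (by omega) (by omega)
        rw [hpv]
        exact (hkF (k (i + (b - i) % P)) (by omega)).mpr ⟨i + (b - i) % P, by omega, rfl⟩
  -- segment sums
  have hkC' : ∀ b, (∑ x ∈ Finset.Ico (k' b) (k' (b + 1)), v' x) ∈ A.C (p' (k' (b + 1))) := by
    intro b
    by_cases hb : b + 1 ≤ i
    · have e1 : k' b = k b := by rw [hk'def]; simp only; rw [if_pos (by omega)]
      have e2 : k' (b + 1) = k (b + 1) := by rw [hk'def]; simp only; rw [if_pos hb]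
      have hbJ : k (b + 1) ≤ k i := hkm.monotone hb
      have e3 : p' (k (b + 1)) = p (k (b + 1)) := hp'low _ (by omega)
      have e4 : ∑ x ∈ Finset.Ico (k b) (k (b + 1)), v' x
          = ∑ x ∈ Finset.Ico (k b) (k (b + 1)), v x := by
        refine Finset.sum_congr rfl fun x hx => ?_
        rw [Finset.mem_Ico] at hx
        show v (pumpIdx K L x) = v x
        rw [pumpIdx_eq_self (by omega)]
      rw [e1, e2, e3, e4]
      exact hkC b
    · have hbi : i ≤ b := by omega
      have hsP : (b - i) % P < P := Nat.mod_lt _ hP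
      have e1 := hk'ge b hbi
      have e2 := hk'succ b hbi
      have hlow : k i ≤ k (i + (b - i) % P) := hkm.monotone (by omega)
      have hhigh : k (i + (b - i) % P + 1) ≤ k j := hkm.monotone (by omega : i + (b - i) % P + 1 ≤ j)
      have hlow2 : k i ≤ k (i + (b - i) % P + 1) := hkm.monotone (by omega)
      have e3 : p' (k' (b + 1)) = p (k (i + (b - i) % P + 1)) := by
        rw [e2]
        by_cases hsp : i + (b - i) % P + 1 < j
        · have := hkm hsp
          exact hp'add _ _ (by omega) (by omega)
        · have hej : i + (b - i) % P + 1 = j := by omega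
          rw [hej, show k j = J from hJdef.symm]
          exact hp'Jadd _
      have e4 : ∑ x ∈ Finset.Ico (k (i + (b - i) % P) + ((b - i) / P) * L)
            (k (i + (b - i) % P + 1) + ((b - i) / P) * L), v' x
          = ∑ x ∈ Finset.Ico (k (i + (b - i) % P)) (k (i + (b - i) % P + 1)), v x := by
        rw [sum_Ico_add_right]
        refine Finset.sum_congr rfl fun x hx => ?_
        rw [Finset.mem_Ico] at hx
        show v (pumpIdx K L (x + (b - i) / P * L)) = v x
        rw [pumpIdx_add_mul _ (by omega), pumpIdx_eq_self (by omega)]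
      rw [e3, e1, e2, e4]
      exact hkC (i + (b - i) % P)
  refine ⟨α', ⟨p', v', reads', hrun', k', hk'0, hk'mono, hkF', hkC'⟩, R0, Rb, hRb, ?_⟩
  intro n hn
  rw [hα'def]
  simp only
  rw [if_neg (by omega), if_neg (by omega)]
  congr 1
  rw [show n + Rb - R0 = (n - R0) + Rb by omega, Nat.add_mod_right]
end

section
/- The ω-language L = {aⁿbⁿ | n ≥ 1}* · {a}^ω ∪ {aⁿbⁿ | n ≥ 1}^ω cannot be written as a finite union U₁V₁^ω ∪ ... ∪ U_nV_n^ω with all U_i, V_i ⊆ {a,b}* Parikh-recognizable. -/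
/-!
Write `a = 0`, `b = 1` and `χ_r = (aʳbʳ)ʳ a^ω` (`blockWord r`), which lies in `L`. If
`L = ⋃ Uᵢ Vᵢ^ω`, some component contains `χ_r` for arbitrarily large `r`; take `r` beyond the
number of states of a Parikh automaton for `U = Uᵢ` and split `χ_r = u β` with `u ∈ U`,
`β ∈ V^ω`. As `β` ends in `a^ω`, some `aᵗ` lies in `V`.

If `u` ends inside the blocks, `u aᵗ β ∈ U V^ω`. Otherwise an accepting run on `u` is in the
same state at an `a` of some block `j` and at both ends of a stretch of `a`s in a later block
`k`; moving that stretch into block `j` keeps the final state and the Parikh vector of the run,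
so the new word is still in `U`. Either way we get a word of `U V^ω` with finitely many `b`s
whose prefix up to the end of block `j` has more `a`s than `b`s. A word of `L` with finitely
many `b`s lies in `{aⁿbⁿ}* a^ω`, and there every prefix ending at a factor `ba` is balanced.
-/

open Filter

section OmegaWords

variable {Sig : Type}

theorem mem_catLang_iff {L₁ : Set (List Sig)} {L₂ : Set (ℕ → Sig)} {α : Stream' Sig} :
    α ∈ CatLang L₁ L₂ ↔ ∃ u ∈ L₁, ∃ β : Stream' Sig, β ∈ L₂ ∧ α = u ++ₛ β := by
  constructor
  · rintro ⟨u, hu, β, hβ, hpre, hsuf⟩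
    refine ⟨u, hu, β, hβ, funext fun n => ?_⟩
    rcases lt_or_ge n u.length with h | h
    · exact (hpre ⟨n, h⟩).trans (Stream'.get_append_left n u β h).symm
    · obtain ⟨k, rfl⟩ := Nat.exists_eq_add_of_le h
      exact ((hsuf k).symm.trans (Stream'.get_append_right k u β).symm)
  · rintro ⟨u, hu, β, hβ, rfl⟩
    exact ⟨u, hu, β, hβ, fun i => Stream'.get_append_left i u β i.isLt,
      fun n => (Stream'.get_append_right n u β).symm⟩

def concatUpTo (w : ℕ → List Sig) (n : ℕ) : List Sig := ((List.range n).map w).flatten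

@[simp] theorem concatUpTo_zero (w : ℕ → List Sig) : concatUpTo w 0 = [] := rfl

theorem concatUpTo_succ (w : ℕ → List Sig) (n : ℕ) :
    concatUpTo w (n + 1) = concatUpTo w n ++ w n := by
  simp [concatUpTo, List.range_succ]

theorem le_length_concatUpTo {w : ℕ → List Sig} (hw : ∀ i, w i ≠ []) (n : ℕ) :
    n ≤ (concatUpTo w n).length := by
  induction n with
  | zero => simp
  | succ n ih =>
    rw [concatUpTo_succ, List.length_append]
    have := List.length_pos_iff.mpr (hw n)
    omega

theorem isOmegaConcat_iff_take {w : ℕ → List Sig} {α : Stream' Sig} :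
    IsOmegaConcat w α ↔ ∀ n, Stream'.take (concatUpTo w n).length α = concatUpTo w n := by
  refine forall_congr' fun n => ⟨fun h => ?_, fun h i => ?_⟩
  · refine List.ext_get (Stream'.length_take _ _) fun i h₁ h₂ => ?_
    simp only [List.get_eq_getElem, Stream'.take_get]
    exact (h ⟨i, h₂⟩).symm
  · show (concatUpTo w n).get i = α i
    exact (List.getElem_of_eq h.symm i.isLt).trans (Stream'.take_get ..)

theorem isOmegaConcat_iff {w : ℕ → List Sig} {α : Stream' Sig} :
    IsOmegaConcat w α ↔
      ∀ n, Stream'.take (w n).length (Stream'.drop (concatUpTo w n).length α) = w n := by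
  rw [isOmegaConcat_iff_take]
  refine ⟨fun h n => ?_, fun h n => ?_⟩
  · have := h (n + 1)
    rw [concatUpTo_succ, List.length_append, Stream'.take_add, h n] at this
    exact List.append_cancel_left this
  · induction n with
    | zero => rfl
    | succ n ih => rw [concatUpTo_succ, List.length_append, Stream'.take_add, ih, h n]

theorem OmegaPower.cons_mem {V : Set (List Sig)} {β : Stream' Sig} (hβ : β ∈ OmegaPower V)
    {v : List Sig} (hv : v ∈ V) (hne : v ≠ []) : v ++ₛ β ∈ OmegaPower V := by
  obtain ⟨w, hwV, hwne, hw⟩ := hβ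
  refine ⟨fun n => n.casesOn v w, fun n => n.casesOn hv hwV, fun n => n.casesOn hne hwne,
    isOmegaConcat_iff.2 fun n => ?_⟩
  have hstart : ∀ n, concatUpTo (fun n => n.casesOn v w) (n + 1) = v ++ concatUpTo w n := by
    intro n
    simp only [concatUpTo, List.range_succ_eq_map, List.map_cons, List.map_map,
      List.flatten_cons]
    rfl
  cases n with
  | zero => simpa using Stream'.take_append_of_le_length _ v β le_rfl
  | succ n =>
    rw [hstart, List.length_append, ← Stream'.drop_drop, Stream'.drop_append_stream]
    exact isOmegaConcat_iff.1 hw n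

theorem IsOmegaConcat.exists_ge_eq_of_mem {w : ℕ → List Sig} {β : Stream' Sig}
    (hw : IsOmegaConcat w β) (hne : ∀ i, w i ≠ []) {n : ℕ} {c : Sig} (hc : c ∈ w n) :
    ∃ k, n ≤ k ∧ β.get k = c := by
  rw [← isOmegaConcat_iff.1 hw n] at hc
  obtain ⟨i, hi, rfl⟩ := List.mem_iff_getElem.1 hc
  refine ⟨(concatUpTo w n).length + i, (le_length_concatUpTo hne n).trans le_self_add, ?_⟩
  rw [Stream'.take_get, Stream'.get_drop]

theorem OmegaPower.exists_replicate_mem {V : Set (List Sig)} {β : Stream' Sig}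
    (hβ : β ∈ OmegaPower V) {c : Sig} (hc : ∀ᶠ n in atTop, β.get n = c) :
    ∃ t, 0 < t ∧ List.replicate t c ∈ V := by
  obtain ⟨w, hwV, hwne, hw⟩ := hβ
  obtain ⟨N, hN⟩ := eventually_atTop.1 hc
  refine ⟨(w N).length, List.length_pos_iff.2 (hwne N), ?_⟩
  convert hwV N
  refine List.eq_replicate_iff.2 ⟨rfl, fun b hb => ?_⟩ |>.symm
  obtain ⟨k, hk, rfl⟩ := hw.exists_ge_eq_of_mem hwne hb
  exact hN k hk

theorem OmegaPower.frequently_eq {V : Set (List Sig)} {β : Stream' Sig}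
    (hβ : β ∈ OmegaPower V) {c : Sig} (hc : ∀ v ∈ V, c ∈ v) : ∃ᶠ n in atTop, β.get n = c := by
  obtain ⟨w, hwV, hwne, hw⟩ := hβ
  exact frequently_atTop.2 fun N => hw.exists_ge_eq_of_mem hwne (hc _ (hwV N))

theorem eventually_append_stream {w : List Sig} {ρ : Stream' Sig} {c : Sig}
    (h : ∀ᶠ n in atTop, ρ.get n = c) : ∀ᶠ n in atTop, (w ++ₛ ρ).get n = c := by
  obtain ⟨N, hN⟩ := eventually_atTop.1 h
  refine eventually_atTop.2 ⟨w.length + N, fun n hn => ?_⟩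
  obtain ⟨k, rfl⟩ := Nat.exists_eq_add_of_le (le_trans (Nat.le_add_right _ _) hn)
  exact (Stream'.get_append_right k w ρ).trans (hN k (by omega))

theorem eventually_get_drop {s : Stream' Sig} {c : Sig}
    (h : ∀ᶠ n in atTop, s.get n = c) (k : ℕ) : ∀ᶠ n in atTop, (s.drop k).get n = c :=
  (tendsto_add_atTop_nat k).eventually h |>.mono fun n hn => by rwa [Stream'.get_drop, add_comm]

end OmegaWords

namespace PBA

variable {Sig : Type} {d : ℕ} {A : PBA Sig d}

variable (A) in
inductive Path : A.Q → List Sig → A.Q → (Fin d → ℕ) → Prop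
  | nil (s : A.Q) : Path s [] s 0
  | cons {s s' t : A.Q} {a : Sig} {w : List Sig} {x y : Fin d → ℕ} :
      (s, a, x, s') ∈ A.Δ → Path s' w t y → Path s (a :: w) t (x + y)

theorem Path.append {s m t : A.Q} {w₁ w₂ : List Sig} {x₁ x₂ : Fin d → ℕ}
    (h₁ : A.Path s w₁ m x₁) (h₂ : A.Path m w₂ t x₂) : A.Path s (w₁ ++ w₂) t (x₁ + x₂) := by
  induction h₁ with
  | nil => simpa using h₂
  | cons hδ _ ih => simpa [add_assoc] using Path.cons hδ (ih h₂)

theorem path_of_run {u : List Sig} {p : ℕ → A.Q} {v : ℕ → Fin d → ℕ}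
    (hrun : ∀ i : Fin u.length, (p i, u.get i, v i, p (i + 1)) ∈ A.Δ) {i j : ℕ}
    (hij : i ≤ j) (hj : j ≤ u.length) :
    A.Path (p i) ((u.take j).drop i) (p j) (∑ k ∈ Finset.Ico i j, v k) := by
  obtain ⟨n, rfl⟩ := Nat.exists_eq_add_of_le hij
  induction n generalizing i with
  | zero => simpa using Path.nil (p i)
  | succ n ih =>
    have hi : i < u.length := by omega
    rw [List.drop_eq_getElem_cons (by rw [List.length_take]; omega),
      Finset.sum_eq_sum_Ico_succ_bot (by omega), List.getElem_take]
    have h := ih (i := i + 1) (by omega) (by omega)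
    rw [Nat.add_right_comm, Nat.add_assoc] at h
    exact Path.cons (hrun ⟨i, hi⟩) h

theorem Path.exists_run {s t : A.Q} {w : List Sig} {x : Fin d → ℕ} (h : A.Path s w t x) :
    ∃ (p : ℕ → A.Q) (v : ℕ → Fin d → ℕ), p 0 = s ∧
      (∀ i : Fin w.length, (p i, w.get i, v i, p (i + 1)) ∈ A.Δ) ∧
      p w.length = t ∧ ∑ j ∈ Finset.range w.length, v j = x := by
  induction h with
  | nil s => exact ⟨fun _ => s, fun _ => 0, rfl, fun i => i.elim0, rfl, by simp⟩
  | @cons s s' t a w x y hδ _ ih =>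
    obtain ⟨p, v, hp0, hrun, hpt, hv⟩ := ih
    refine ⟨fun i => i.casesOn s p, fun i => i.casesOn x v, rfl, fun i => ?_, hpt,
      by simp [Finset.sum_range_succ', hv, add_comm]⟩
    cases i using Fin.cases with
    | zero => simpa [hp0] using hδ
    | succ i => exact hrun i

theorem finAccepts_of_path {w : List Sig} {t : A.Q} {x : Fin d → ℕ} (h : A.Path A.q0 w t x)
    (ht : t ∈ A.F) (hx : x ∈ A.C) : A.FinAccepts w := by
  obtain ⟨p, v, hp0, hrun, rfl, rfl⟩ := h.exists_run
  exact ⟨p, v, hp0, hrun, ht, hx⟩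

theorem finAccepts_swap {u : List Sig} {p : ℕ → A.Q} {v : ℕ → Fin d → ℕ} (hp0 : p 0 = A.q0)
    (hrun : ∀ i : Fin u.length, (p i, u.get i, v i, p (i + 1)) ∈ A.Δ) (hF : p u.length ∈ A.F)
    (hC : ∑ j ∈ Finset.range u.length, v j ∈ A.C) {i j k : ℕ} (hij : i ≤ j) (hjk : j ≤ k)
    (hk : k ≤ u.length) (hpij : p i = p j) (hpjk : p j = p k) :
    A.FinAccepts (u.take i ++ (u.take k).drop j ++ (u.take j).drop i ++ u.drop k) := by
  have h₁ := path_of_run hrun (Nat.zero_le i) (hij.trans (hjk.trans hk))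
  have h₂ := path_of_run hrun hij (hjk.trans hk)
  have h₃ := path_of_run hrun hjk hk
  have h₄ := path_of_run hrun hk le_rfl
  rw [hp0, List.drop_zero] at h₁
  rw [List.take_length] at h₄
  rw [← hpij] at h₃
  rw [hpij.trans hpjk] at h₂
  rw [← hpjk] at h₄
  refine finAccepts_of_path ((h₁.append h₃).append h₂ |>.append h₄) hF ?_
  convert hC using 1
  rw [Finset.range_eq_Ico,
    ← Finset.sum_Ico_consecutive _ (Nat.zero_le i) (hij.trans (hjk.trans hk)),
    ← Finset.sum_Ico_consecutive _ hij (hjk.trans hk), ← Finset.sum_Ico_consecutive _ hjk hk]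
  abel

end PBA

theorem exists_lt_le_map_eq {Q : Type*} [Fintype Q] (f : ℕ → Q) {N : ℕ}
    (hN : Fintype.card Q ≤ N) : ∃ a b, a < b ∧ b ≤ N ∧ f a = f b := by
  obtain ⟨a, ha, b, hb, hne, heq⟩ := Finset.exists_ne_map_eq_of_card_lt_of_maps_to
    (s := Finset.range (N + 1)) (t := Finset.univ) (by simpa [Nat.lt_succ_iff] using hN)
    (f := f) (fun _ _ => Finset.mem_coe.2 (Finset.mem_univ _))
  rw [Finset.mem_range] at ha hb
  rcases hne.lt_or_gt with h | h
  · exact ⟨a, b, h, by omega, heq⟩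
  · exact ⟨b, a, h, by omega, heq.symm⟩

-- `0 < o₂`: the stretch `[o₂, o₃)` never starts block `k`, so moving it into block `j` leaves
-- the letter right after block `j` unchanged.
theorem exists_state_eq_in_two_blocks {Q : Type*} [Fintype Q] (p : ℕ → Q) {r : ℕ}
    (hr : Fintype.card Q + 2 ≤ r) :
    ∃ j k, j < k ∧ k < r ∧ ∃ o₁ o₂ o₃, o₁ < r ∧ 0 < o₂ ∧ o₂ < o₃ ∧ o₃ < r ∧
      p (2 * r * j + o₁) = p (2 * r * k + o₂) ∧ p (2 * r * k + o₂) = p (2 * r * k + o₃) := by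
  choose a b hab hb hloop using
    fun j => exists_lt_le_map_eq (fun z => p (2 * r * j + (1 + z))) le_rfl
  obtain ⟨j, k, hjk, hk, hst⟩ :=
    exists_lt_le_map_eq (fun j => p (2 * r * j + (1 + a j))) (N := r - 1) (by omega)
  exact ⟨j, k, hjk, by omega, 1 + a j, 1 + a k, 1 + b k, by have := hab j; have := hb j; omega,
    by omega, by have := hab k; omega, by have := hb k; omega, hst, hloop k⟩

def abBlock (m : ℕ) : List (Fin 2) := List.replicate m 0 ++ List.replicate m 1

def anbn : Set (List (Fin 2)) := {w | ∃ m, 1 ≤ m ∧ w = abBlock m}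

def anbnOmegaLang : Set (ℕ → Fin 2) :=
  CatLang (ListStar anbn) {α | ∀ k, α k = 0} ∪ OmegaPower anbn

@[simp] theorem length_abBlock (m : ℕ) : (abBlock m).length = 2 * m := by
  simp [abBlock, two_mul]

@[simp] theorem count_abBlock (m : ℕ) (c : Fin 2) : (abBlock m).count c = m := by
  fin_cases c <;> simp [abBlock, List.count_replicate]

theorem abBlock_pairwise_le (m : ℕ) : (abBlock m).Pairwise (· ≤ ·) := by
  simp [abBlock, List.pairwise_append, List.pairwise_replicate]

theorem count_eq_of_flatten_append_eq {ws : List (List (Fin 2))} (hws : ∀ s ∈ ws, s ∈ anbn)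
    {w rest : List (Fin 2)} (h : ws.flatten ++ [0] = w ++ 0 :: rest)
    (hw : w.getLast? = some 1) : w.count 0 = w.count 1 := by
  induction ws generalizing w with
  | nil =>
    have hlen : 1 = w.length + (rest.length + 1) := by simpa using congrArg List.length h
    obtain rfl : w = [] := List.eq_nil_of_length_eq_zero (by omega)
    simp at hw
  | cons s ws ih =>
    obtain ⟨m, -, rfl⟩ := hws s List.mem_cons_self
    rw [List.flatten_cons, List.append_assoc] at h
    rcases List.append_eq_append_iff.1 h with ⟨w', rfl, h'⟩ | ⟨c, hblock, hc⟩
    · rcases eq_or_ne w' [] with rfl | hw'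
      · simp
      · rw [List.getLast?_append_of_ne_nil _ hw'] at hw
        simp [ih (fun s hs => hws s (List.mem_cons_of_mem _ hs)) h' hw]
    · rcases c with _ | ⟨a, c⟩
      · rw [List.append_nil] at hblock
        simp [← hblock]
      · obtain ⟨rfl, -⟩ := List.cons_eq_cons.1 hc
        obtain ⟨w₀, rfl⟩ := List.getLast?_eq_some_iff.1 hw
        have := hblock ▸ abBlock_pairwise_le m
        simp [List.pairwise_append] at this

theorem count_eq_of_append_mem {w : List (Fin 2)} {ρ : Stream' (Fin 2)}
    (h : w ++ₛ ρ ∈ anbnOmegaLang) (hρ : ∀ᶠ n in atTop, ρ.get n = 0) (hw : w.getLast? = some 1)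
    (hρ0 : ρ.get 0 = 0) : w.count 0 = w.count 1 := by
  obtain ⟨w₀, rfl⟩ := List.getLast?_eq_some_iff.1 hw
  rcases h with h | h
  · obtain ⟨F, ⟨ws, hws, rfl⟩, β, hβ, hγ⟩ := mem_catLang_iff.1 h
    obtain rfl : β = Stream'.const 0 := funext hβ
    have hlen : w₀.length < ws.flatten.length := by
      by_contra! hle
      have h1 : (w₀ ++ [1] ++ₛ ρ).get w₀.length = 1 := by
        rw [Stream'.get_append_left _ _ _ (by simp)]
        simp
      obtain ⟨k, hk⟩ := Nat.exists_eq_add_of_le hle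
      rw [hγ, hk, Stream'.get_append_right, Stream'.get_const] at h1
      exact absurd h1 (by decide)
    have hpre : w₀ ++ [1] ++ [0] <+: ws.flatten ++ [0] := by
      have := congrArg (Stream'.take ((w₀ ++ [1]).length + 1)) hγ
      rw [← Stream'.append_take, Stream'.const_eq, ← Stream'.append_eq_cons,
        ← Stream'.append_append_stream,
        Stream'.take_append_of_le_length _ (ws.flatten ++ [0]) _
          (by simp only [List.length_append, List.length_singleton]; omega)] at this
      have h1 : Stream'.take 1 ρ = [0] := by simp [Stream'.take, ← hρ0]
      rw [h1] at this
      exact this ▸ List.take_prefix _ _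
    obtain ⟨rest, hrest⟩ := hpre
    exact count_eq_of_flatten_append_eq hws (rest := rest) (by rw [← hrest]; simp) (by simp)
  · obtain ⟨n, h0, h1⟩ := ((eventually_append_stream hρ).and_frequently
      (OmegaPower.frequently_eq h (c := 1) fun v ⟨m, hm, hv⟩ =>
        hv ▸ List.mem_append_right _ (List.mem_replicate.2 ⟨by omega, rfl⟩))).exists
    rw [h0] at h1
    exact absurd h1 (by decide)

def blockWord (r : ℕ) : Stream' (Fin 2) :=
  (List.replicate r (abBlock r)).flatten ++ₛ Stream'.const 0

theorem blockWord_mem {r : ℕ} (hr : 1 ≤ r) : blockWord r ∈ anbnOmegaLang :=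
  Or.inl <| mem_catLang_iff.2 ⟨_, ⟨List.replicate r (abBlock r),
    fun _ hs => ⟨r, hr, List.eq_of_mem_replicate hs⟩, rfl⟩, Stream'.const 0, fun _ => rfl, rfl⟩

theorem blockWord_eventually_eq_zero (r : ℕ) : ∀ᶠ n in atTop, (blockWord r).get n = 0 :=
  eventually_append_stream (Eventually.of_forall fun _ => rfl)

theorem length_flatten_replicate_abBlock (k r : ℕ) :
    (List.replicate k (abBlock r)).flatten.length = 2 * r * k := by
  simp only [List.length_flatten, List.map_replicate, length_abBlock, List.sum_replicate,
    smul_eq_mul]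
  ring

theorem take_blockWord {r m : ℕ} (hm : m ≤ r) :
    Stream'.take (2 * r * m) (blockWord r) = (List.replicate m (abBlock r)).flatten := by
  have hsplit : List.replicate r (abBlock r) =
      List.replicate m (abBlock r) ++ List.replicate (r - m) (abBlock r) := by
    rw [← List.replicate_add, Nat.add_sub_cancel' hm]
  rw [blockWord, Stream'.take_append_of_le_length _ _ _ (by
      rw [length_flatten_replicate_abBlock]; exact Nat.mul_le_mul_left _ hm), hsplit,
    List.flatten_append, List.take_left' (length_flatten_replicate_abBlock m r)]

theorem blockWord_get_of_mod_lt {r n : ℕ} (h : n % (2 * r) < r) : (blockWord r).get n = 0 := by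
  have hr : 0 < 2 * r := by omega
  have hdiv := Nat.div_add_mod n (2 * r)
  rcases lt_or_ge (n / (2 * r)) r with hj | hj
  · apply Option.some_injective
    rw [← Stream'.getElem?_take (Nat.lt_mul_div_succ n hr), take_blockWord hj, List.replicate_succ',
      List.flatten_append, List.flatten_singleton, List.getElem?_append_right (by
        rw [length_flatten_replicate_abBlock]; omega), length_flatten_replicate_abBlock,
      show n - 2 * r * (n / (2 * r)) = n % (2 * r) by omega]
    simp [abBlock, List.getElem?_append_left, h]
  · obtain ⟨k, rfl⟩ : ∃ k, n = (List.replicate r (abBlock r)).flatten.length + k :=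
      Nat.exists_eq_add_of_le (by
        rw [length_flatten_replicate_abBlock]; have := Nat.mul_le_mul_left (2 * r) hj; omega)
    rw [blockWord, Stream'.get_append_right, Stream'.get_const]

theorem count_take_blockWord {r m : ℕ} (hm : m ≤ r) (c : Fin 2) :
    (Stream'.take (2 * r * m) (blockWord r)).count c = r * m := by
  rw [take_blockWord hm, List.count_flatten]
  simp [mul_comm]

theorem getLast?_take_blockWord {r m : ℕ} (hm : m ≤ r) (hm₀ : m ≠ 0) :
    (Stream'.take (2 * r * m) (blockWord r)).getLast? = some 1 := by
  rw [take_blockWord hm, List.getLast?_flatten_replicate hm₀, abBlock,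
    List.getLast?_append_of_ne_nil _ (mt (List.replicate_eq_nil_iff _).1 (by omega)),
    List.getLast?_replicate, if_neg (by omega)]

theorem take_blockWord_append_replicate_not_mem {r J x e : ℕ} {δ : Stream' (Fin 2)} (hJ : J < r)
    (hx : x < 2 * r * (J + 1)) (he : 0 < e)
    (hδ : ∀ n ≤ 2 * r * (J + 1) - x, δ.get n = (blockWord r).get (x + n))
    (hδ' : ∀ᶠ n in atTop, δ.get n = 0) :
    Stream'.take x (blockWord r) ++ List.replicate e 0 ++ₛ δ ∉ anbnOmegaLang := by
  intro hmem
  set q := 2 * r * (J + 1)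
  have htake : Stream'.take (q - x) δ = (Stream'.take q (blockWord r)).drop x := by
    have := Stream'.take_drop x (q - x) (blockWord r)
    rw [Nat.add_sub_cancel' hx.le] at this
    rw [← this]
    refine List.ext_getElem (by simp) fun n h₁ _ => ?_
    simp only [Stream'.take_get, Stream'.get_drop]
    exact hδ n (by rw [Stream'.length_take] at h₁; omega)
  rw [← Stream'.append_take_drop (q - x) δ, ← Stream'.append_append_stream, htake] at hmem
  have hcount := count_eq_of_append_mem hmem (eventually_get_drop hδ' _)
    (by
      rw [List.getLast?_append_of_ne_nil _
          (by simp only [ne_eq, List.drop_eq_nil_iff, Stream'.length_take, not_le]; omega),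
        List.getLast?_drop, if_neg (by simpa using hx), getLast?_take_blockWord hJ (by omega)])
    (by
      rw [Stream'.get_drop, add_zero, hδ _ le_rfl, Nat.add_sub_cancel' hx.le]
      exact blockWord_get_of_mod_lt (by simp only [q, Nat.mul_mod_right]; omega))
  have hsplit := List.take_append_drop x (Stream'.take q (blockWord r))
  rw [Stream'.take_take, min_eq_right hx.le] at hsplit
  have h0 := congrArg (List.count 0) hsplit
  have h1 := congrArg (List.count 1) hsplit
  have hq : ∀ c, (Stream'.take q (blockWord r)).count c = r * (J + 1) := count_take_blockWord hJ
  have he₀ : (List.replicate e (0 : Fin 2)).count 0 = e := List.count_replicate_self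
  have he₁ : (List.replicate e (0 : Fin 2)).count 1 = 0 := List.count_eq_zero.2 (by simp)
  simp only [List.count_append, he₀, he₁, hq] at hcount h0 h1
  omega

theorem eventually_eq_zero_of_blockWord_eq_append {r : ℕ} {u : List (Fin 2)} {β : Stream' (Fin 2)}
    (hχ : blockWord r = u ++ₛ β) : ∀ᶠ n in atTop, β.get n = 0 := by
  rw [← Stream'.drop_append_stream u β, ← hχ]
  exact eventually_get_drop (blockWord_eventually_eq_zero r) _

theorem exists_finAccepts_append_not_mem {d : ℕ} {A : PBA (Fin 2) d} {r : ℕ}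
    (hr : Fintype.card A.Q + 2 ≤ r) {u : List (Fin 2)} {β : Stream' (Fin 2)}
    (hχ : blockWord r = u ++ₛ β) (hu : A.FinAccepts u) (hlen : 2 * r * r ≤ u.length) :
    ∃ u', A.FinAccepts u' ∧ u' ++ₛ β ∉ anbnOmegaLang := by
  obtain ⟨p, v, hp0, hrun, hF, hC⟩ := hu
  obtain ⟨j, k, hjk, hk, o₁, o₂, o₃, ho₁, ho₂, ho₂₃, ho₃, hp₁₂, hp₂₃⟩ :=
    exists_state_eq_in_two_blocks p hr
  have hkr : 2 * r * k + 2 * r ≤ 2 * r * r := by nlinarith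
  have hjk' : 2 * r * j + 2 * r ≤ 2 * r * k := by nlinarith
  have hj : 2 * r * (j + 1) = 2 * r * j + 2 * r := by ring
  have hget : ∀ n (h : n < u.length), u[n] = (blockWord r).get n := fun n h => by
    rw [hχ, Stream'.get_append_left _ _ _ h]
  refine ⟨_, PBA.finAccepts_swap hp0 hrun hF hC (by omega) (by omega) (by omega) hp₁₂ hp₂₃, ?_⟩
  have hpre : u.take (2 * r * j + o₁) = Stream'.take (2 * r * j + o₁) (blockWord r) := by
    rw [hχ, Stream'.take_append_of_le_length _ _ _ (by omega)]
  have hloop : (u.take (2 * r * k + o₃)).drop (2 * r * k + o₂) = List.replicate (o₃ - o₂) 0 := by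
    refine List.eq_replicate_iff.2
      ⟨by simp only [List.length_drop, List.length_take]; omega, fun c hc => ?_⟩
    obtain ⟨n, hn, rfl⟩ := List.mem_iff_getElem.1 hc
    simp only [List.length_drop, List.length_take] at hn
    rw [List.getElem_drop, List.getElem_take, hget _ (by omega)]
    apply blockWord_get_of_mod_lt
    rw [show 2 * r * k + o₂ + n = o₂ + n + 2 * r * k by ring, Nat.add_mul_mod_self_left,
      Nat.mod_eq_of_lt (by omega)]
    omega
  have := take_blockWord_append_replicate_not_mem (r := r) (J := j) (x := 2 * r * j + o₁)
    (e := o₃ - o₂) (δ := (u.take (2 * r * k + o₂)).drop (2 * r * j + o₁) ++ₛ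
      (u.drop (2 * r * k + o₃) ++ₛ β)) (by omega) (by omega) (by omega) (fun n hn => ?_)
    (eventually_append_stream (eventually_append_stream
      (eventually_eq_zero_of_blockWord_eq_append hχ)))
  · simpa only [hpre, hloop, List.append_assoc, Stream'.append_append_stream] using this
  · rw [hj] at hn
    rw [Stream'.get_append_left _ _ _ (by simp only [List.length_drop, List.length_take]; omega),
      List.getElem_drop, List.getElem_take, hget _ (by omega)]

theorem append_replicate_zero_append_not_mem {r e : ℕ} {u : List (Fin 2)} {β : Stream' (Fin 2)}
    (hχ : blockWord r = u ++ₛ β) (hlen : u.length < 2 * r * r) (he : 0 < e) :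
    u ++ₛ (List.replicate e 0 ++ₛ β) ∉ anbnOmegaLang := by
  have hr : 0 < 2 * r := by
    rcases Nat.eq_zero_or_pos r with rfl | hr
    · simp at hlen
    · omega
  have hu : Stream'.take u.length (blockWord r) = u := by
    rw [hχ, Stream'.take_append_of_le_length _ _ _ le_rfl, List.take_length]
  have := take_blockWord_append_replicate_not_mem (J := u.length / (2 * r))
    (Nat.div_lt_of_lt_mul hlen) (Nat.lt_mul_div_succ _ hr) he (δ := β)
    (fun n _ => by rw [hχ, Stream'.get_append_right])
    (eventually_eq_zero_of_blockWord_eq_append hχ)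
  rwa [hu, Stream'.append_append_stream] at this

/-- The ω-language `{aⁿbⁿ ∣ n ≥ 1}* · {a}^ω ∪ {aⁿbⁿ ∣ n ≥ 1}^ω` (with `a = 0`, `b = 1`)
is not a finite union `U₁V₁^ω ∪ ⋯ ∪ U_nV_n^ω` with all `U_i, V_i` Parikh-recognizable. -/
theorem counterexample_not_in_LPAomega :
    ¬ ∃ (n : ℕ) (U V : Fin n → Set (List (Fin 2))),
      (∀ i, ParikhRec (U i)) ∧ (∀ i, ParikhRec (V i)) ∧
      (CatLang
          (ListStar {w : List (Fin 2) | ∃ m : ℕ, 1 ≤ m ∧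
            w = List.replicate m 0 ++ List.replicate m 1})
          {α : ℕ → Fin 2 | ∀ k, α k = 0}
        ∪ OmegaPower {w : List (Fin 2) | ∃ m : ℕ, 1 ≤ m ∧
            w = List.replicate m 0 ++ List.replicate m 1})
      = ⋃ i, CatLang (U i) (OmegaPower (V i)) := by
  rintro ⟨n, U, V, hU, -, hEq⟩
  change anbnOmegaLang = _ at hEq
  obtain ⟨i, hi⟩ := frequently_exists.1 <| Eventually.frequently <|
    (eventually_ge_atTop 1).mono fun r hr => Set.mem_iUnion.1 (hEq ▸ blockWord_mem hr)
  have hsub : CatLang (U i) (OmegaPower (V i)) ⊆ anbnOmegaLang :=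
    hEq ▸ Set.subset_iUnion (fun i => CatLang (U i) (OmegaPower (V i))) i
  obtain ⟨d, A, -, hA⟩ := hU i
  obtain ⟨r, hmem, hr⟩ := (hi.and_eventually (eventually_ge_atTop (Fintype.card A.Q + 2))).exists
  obtain ⟨u, hu, β, hβ, hχ⟩ := mem_catLang_iff.1 hmem
  rcases lt_or_ge u.length (2 * r * r) with hlen | hlen
  · obtain ⟨t, ht, htV⟩ :=
      OmegaPower.exists_replicate_mem hβ (eventually_eq_zero_of_blockWord_eq_append hχ)
    exact append_replicate_zero_append_not_mem hχ hlen ht <|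
      hsub <| mem_catLang_iff.2 ⟨u, hu, _,
        OmegaPower.cons_mem hβ htV (mt (List.replicate_eq_nil_iff _).1 ht.ne'), rfl⟩
  · obtain ⟨u', hu', hnot⟩ :=
      exists_finAccepts_append_not_mem hr hχ (show u ∈ A.FinLang from hA ▸ hu) hlen
    exact hnot (hsub (mem_catLang_iff.2 ⟨u', hA ▸ hu', β, hβ, rfl⟩))
end

section
/- The subset sum problem reduces in polynomial time to non-emptiness of 1-dimensional PPBA: given a finite multiset M = {m₁,...,m_k} ⊆ ℕ and a threshold ℓ, the PPBA A_I over alphabet {x₁,...,x_k, x_D} with states q₀,...,q_k, q_f, transitions (q_{i-1}, x_i, m_i, q_i) and (q_{i-1}, x_i, 0, q_i) for 1 ≤ i ≤ k, plus (q_k, x_D, 0, q_f) and (q_f, x_D, 0, q_f), accepting state q_f and semi-linear set {ℓ}, recognizes a nonempty ω-language if and only if some subset S ⊆ M satisfies ∑_{s∈S} s = ℓ. -/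
/-- Correctness of the subset-sum reduction: the 1-dimensional PPBA `A_I` built from
`M = {m 0, …, m (k-1)}` and threshold `ℓ` recognizes a nonempty ω-language iff some
subset of `M` sums to `ℓ`. -/
theorem subsetSum_reduction (k : ℕ) (m : Fin k → ℕ) (ℓ : ℕ) :
    (PBA.PrefixLang
      { Q := Fin (k + 2)
        fin := inferInstance
        q0 := 0
        Δ := {t : Fin (k + 2) × Fin (k + 1) × (Fin 1 → ℕ) × Fin (k + 2) |
            (∃ i : Fin k,
              t = (i.castLE (by omega), i.castLE (by omega), fun _ => m i,
                    i.succ.castLE (by omega)) ∨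
              t = (i.castLE (by omega), i.castLE (by omega), fun _ => 0,
                    i.succ.castLE (by omega))) ∨
            t = (⟨k, by omega⟩, ⟨k, by omega⟩, fun _ => 0, ⟨k + 1, by omega⟩) ∨
            t = (⟨k + 1, by omega⟩, ⟨k, by omega⟩, fun _ => 0, ⟨k + 1, by omega⟩)}
        F := {⟨k + 1, by omega⟩}
        C := {fun _ => ℓ} }).Nonempty
    ↔ ∃ S : Finset (Fin k), ∑ i ∈ S, m i = ℓ := by
  constructor
  · rintro ⟨α, p, v, ⟨hp0, hstep⟩, hpref⟩
    -- the state sequence is forced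
    have hval : ∀ n, (p n).val = min n (k + 1) := by
      intro n
      induction n with
      | zero => simp [hp0]
      | succ n ih =>
        rcases hstep n with ⟨i, h | h⟩ | h | h <;>
          simp only [Prod.mk.injEq, Set.mem_setOf_eq] at h <;>
          obtain ⟨h1, -, -, h4⟩ := h <;>
          have e1 := congrArg Fin.val h1 <;>
          have e4 := congrArg Fin.val h4 <;>
          simp only [Fin.coe_castLE, Fin.val_succ] at e1 e4
        · have := i.isLt; omega
        · have := i.isLt; omega
        · omega
        · omega
    have hvlt : ∀ i : Fin k, v i.val 0 = m i ∨ v i.val 0 = 0 := by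
      intro i
      rcases hstep i.val with ⟨i', h | h⟩ | h | h <;>
        simp only [Prod.mk.injEq, Set.mem_setOf_eq] at h <;>
        obtain ⟨h1, -, h3, -⟩ := h <;>
        have e1 := congrArg Fin.val h1 <;>
        simp only [Fin.coe_castLE] at e1 <;>
        rw [hval] at e1
      · left
        have hi : i' = i := by
          have := i.isLt; have := i'.isLt
          exact Fin.ext (by omega)
        rw [hi] at h3; exact congrFun h3 0
      · right; exact congrFun h3 0
      · have := i.isLt; omega
      · have := i.isLt; omega
    have hvge : ∀ j, k ≤ j → v j 0 = 0 := by
      intro j hj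
      rcases hstep j with ⟨i', h | h⟩ | h | h <;>
        simp only [Prod.mk.injEq, Set.mem_setOf_eq] at h <;>
        obtain ⟨h1, -, h3, -⟩ := h <;>
        [skip; skip; exact congrFun h3 0; exact congrFun h3 0] <;>
        have e1 := congrArg Fin.val h1 <;>
        simp only [Fin.coe_castLE] at e1 <;>
        rw [hval] at e1 <;>
        have := i'.isLt <;> omega
    obtain ⟨n, -, hn1, hF, hC⟩ := hpref 0
    simp only [Set.mem_singleton_iff] at hF hC
    have hnk : k + 1 ≤ n := by
      have h : (p n).val = k + 1 := by rw [hF]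
      rw [hval] at h; omega
    have hsum : (∑ j ∈ Finset.range n, v j) 0 = ℓ := by rw [hC]
    rw [Finset.sum_apply] at hsum
    refine ⟨Finset.univ.filter (fun i : Fin k => v i.val 0 ≠ 0), ?_⟩
    have h1 : ∑ j ∈ Finset.range k, v j 0 = ∑ j ∈ Finset.range n, v j 0 :=
      Finset.sum_subset (Finset.range_subset_range.2 (by omega))
        (fun j _ hj => hvge j (by simpa using hj))
    have h2 : ∑ j ∈ Finset.range k, v j 0 = ∑ i : Fin k, v i.val 0 :=
      (Fin.sum_univ_eq_sum_range (fun j => v j 0) k).symm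
    have h3 : ∑ i : Fin k, v i.val 0
        = ∑ i ∈ Finset.univ.filter (fun i : Fin k => v i.val 0 ≠ 0), v i.val 0 :=
      (Finset.sum_filter_ne_zero _).symm
    have h4 : ∑ i ∈ Finset.univ.filter (fun i : Fin k => v i.val 0 ≠ 0), v i.val 0
        = ∑ i ∈ Finset.univ.filter (fun i : Fin k => v i.val 0 ≠ 0), m i := by
      refine Finset.sum_congr rfl fun i hi => ?_
      simp only [Finset.mem_filter] at hi
      rcases hvlt i with h | h
      · exact h
      · exact absurd h hi.2
    omega
  · rintro ⟨S, hS⟩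
    refine ⟨fun i => ⟨min i k, by omega⟩,
      fun n => ⟨min n (k + 1), by omega⟩,
      fun j _ => if h : j < k then (if (⟨j, h⟩ : Fin k) ∈ S then m ⟨j, h⟩ else 0) else 0,
      ⟨Fin.ext (by simp), ?_⟩, ?_⟩
    · intro i
      rcases lt_trichotomy i k with hi | hi | hi
      · refine Or.inl ⟨⟨i, hi⟩, ?_⟩
        by_cases hmem : (⟨i, hi⟩ : Fin k) ∈ S
        · left
          simp only [Prod.mk.injEq]
          refine ⟨Fin.ext (by simp; omega), Fin.ext (by simp; omega), ?_,
            Fin.ext (by simp; omega)⟩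
          funext x
          simp [hi, hmem]
        · right
          simp only [Prod.mk.injEq]
          refine ⟨Fin.ext (by simp; omega), Fin.ext (by simp; omega), ?_,
            Fin.ext (by simp; omega)⟩
          funext x
          simp [hi, hmem]
      · refine Or.inr (Or.inl ?_)
        simp only [Prod.mk.injEq]
        refine ⟨Fin.ext (by simp; omega), Fin.ext (by simp; omega), ?_,
          Fin.ext (by simp; omega)⟩
        funext x
        simp [hi]
      · refine Or.inr (Or.inr ?_)
        simp only [Prod.mk.injEq]
        refine ⟨Fin.ext (by simp; omega), Fin.ext (by simp; omega), ?_,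
          Fin.ext (by simp; omega)⟩
        funext x
        simp; omega
    · intro N
      refine ⟨max N (k + 1), le_max_left _ _, by omega, ?_, ?_⟩
      · show _ ∈ ({_} : Set _)
        simp only [Set.mem_singleton_iff]
        exact Fin.ext (by simp)
      · show _ ∈ ({_} : Set _)
        simp only [Set.mem_singleton_iff]
        funext x
        rw [Finset.sum_apply]
        have h1 : ∑ j ∈ Finset.range k,
            (if h : j < k then (if (⟨j, h⟩ : Fin k) ∈ S then m ⟨j, h⟩ else 0) else 0)
            = ∑ j ∈ Finset.range (max N (k + 1)),
            (if h : j < k then (if (⟨j, h⟩ : Fin k) ∈ S then m ⟨j, h⟩ else 0) else 0) := by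
          refine Finset.sum_subset (Finset.range_subset_range.2 (by omega)) ?_
          intro j _ hj
          simp only [Finset.mem_range, not_lt] at hj
          rw [dif_neg (by omega)]
        rw [← h1, ← Fin.sum_univ_eq_sum_range]
        simp only [Fin.is_lt, dif_pos, Fin.eta]
        rw [Finset.sum_ite_mem, Finset.univ_inter, hS]
end
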